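/- arXiv:1605.08298 — 9 statements merged into one kernel-verified Lean document; each statement's English description precedes it below -/
import Mathlib

section
/- Let A be a unital C*-algebra over ℂ and Ω a state on A. If (H, π, ξ) and (H′, π′, ξ′) are two GNS triples for Ω, then there exists a unitary operator U : H → H′ such that Uξ = ξ′ and U π(a) U⁻¹ = π′(a) for all a ∈ A. -/
/-!
Since `⟪π a ξ, π b ξ⟫ = Ω (star a * b)`, the norm of `π a ξ` is determined by the state alone,
so `π a ξ ↦ π' a ξ'` is a well-defined isometry between the dense orbits of the two cyclic
vectors. It extends to a unitary `H ≃ₗᵢ H'`, which intertwines `π` and `π'` because it does so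
on the dense orbit.
-/

open scoped ComplexOrder

/-- A state on a unital (C*-)algebra over ℂ: a linear functional which is
positive (`Ω (a* a) ≥ 0`, i.e. a nonnegative real) and normalized (`Ω 1 = 1`). -/
def IsState {A : Type*} [Ring A] [StarRing A] [Algebra ℂ A]
    (Ω : A →ₗ[ℂ] ℂ) : Prop :=
  (∀ a : A, 0 ≤ Ω (star a * a)) ∧ Ω 1 = 1

/-- A GNS triple for a state `Ω` on `A`: a Hilbert space `H`, a unital
*-homomorphism `π : A → B(H)` and a cyclic unit vector `ξ` with
`Ω a = ⟨ξ, π a ξ⟩` for all `a`. -/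
def IsGNSTriple {A : Type*} [NormedRing A] [StarRing A] [CStarRing A]
    [NormedAlgebra ℂ A] [StarModule ℂ A] [CompleteSpace A]
    (Ω : A →ₗ[ℂ] ℂ)
    (H : Type*) [NormedAddCommGroup H] [InnerProductSpace ℂ H] [CompleteSpace H]
    (π : A →⋆ₐ[ℂ] H →L[ℂ] H) (ξ : H) : Prop :=
  ‖ξ‖ = 1 ∧
  (∀ a : A, Ω a = (inner ℂ ξ (π a ξ) : ℂ)) ∧
  Dense (↑(Submodule.span ℂ (Set.range fun a : A => π a ξ)) : Set H)

section Extension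

variable {𝕜 V E F : Type*} [NormedField 𝕜] [AddCommGroup V] [Module 𝕜 V]
  [NormedAddCommGroup E] [NormedSpace 𝕜 E] [CompleteSpace E]
  [NormedAddCommGroup F] [NormedSpace 𝕜 F] [CompleteSpace F]

theorem exists_linearIsometryEquiv_apply_eq_of_norm_eq {L : V →ₗ[𝕜] E} {L' : V →ₗ[𝕜] F}
    (hL : DenseRange L) (hL' : DenseRange L') (hnorm : ∀ v, ‖L' v‖ = ‖L v‖) :
    ∃ U : E ≃ₗᵢ[𝕜] F, ∀ v, U (L v) = L' v := by
  have hbound : ∃ C, ∀ v, ‖L' v‖ ≤ C * ‖L v‖ := ⟨1, fun v => by simp [hnorm v]⟩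
  set U₀ : E →L[𝕜] F := L'.extendOfNorm L
  have hU₀ : ∀ v, U₀ (L v) = L' v := LinearMap.extendOfNorm_eq hL hbound
  have hU₀_norm : ∀ x, ‖U₀ x‖ = ‖x‖ := by
    refine hL.induction ?_ (isClosed_eq (by fun_prop) continuous_norm)
    rintro _ ⟨v, rfl⟩
    rw [hU₀, hnorm]
  let U : E →ₗᵢ[𝕜] F := ⟨U₀.toLinearMap, hU₀_norm⟩
  have hU_surj : Function.Surjective U := by
    have hclosed : IsClosed (Set.range U) := U.isometry.isClosedEmbedding.isClosed_range
    have hsub : Set.range L' ⊆ Set.range U := by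
      rintro _ ⟨v, rfl⟩
      exact ⟨L v, hU₀ v⟩
    intro y
    exact closure_minimal hsub hclosed (hL'.closure_range ▸ Set.mem_univ y)
  exact ⟨LinearIsometryEquiv.ofSurjective U hU_surj, hU₀⟩

end Extension

section Cyclic

variable {A H H' : Type*} [Ring A] [StarRing A] [Algebra ℂ A]
  [NormedAddCommGroup H] [InnerProductSpace ℂ H] [CompleteSpace H]
  [NormedAddCommGroup H'] [InnerProductSpace ℂ H'] [CompleteSpace H']

noncomputable def orbitMap (π : A →⋆ₐ[ℂ] H →L[ℂ] H) (ξ : H) : A →ₗ[ℂ] H :=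
  (ContinuousLinearMap.apply ℂ H ξ).toLinearMap ∘ₗ π.toAlgHom.toLinearMap

@[simp]
theorem orbitMap_apply (π : A →⋆ₐ[ℂ] H →L[ℂ] H) (ξ : H) (a : A) :
    orbitMap π ξ a = π a ξ := rfl

theorem denseRange_orbitMap {π : A →⋆ₐ[ℂ] H →L[ℂ] H} {ξ : H}
    (hdense : Dense (Submodule.span ℂ (Set.range fun a => π a ξ) : Set H)) :
    DenseRange (orbitMap π ξ) := by
  rwa [DenseRange, ← LinearMap.coe_range, ← Submodule.span_eq (LinearMap.range _),
    LinearMap.coe_range]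

theorem inner_apply_apply_eq_inner_apply_star_mul (π : A →⋆ₐ[ℂ] H →L[ℂ] H) (ξ : H) (a b : A) :
    inner ℂ (π a ξ) (π b ξ) = inner ℂ ξ (π (star a * b) ξ) := by
  rw [map_mul, map_star, mul_apply_eq_comp, ContinuousLinearMap.star_eq_adjoint,
    ContinuousLinearMap.adjoint_inner_right]

theorem norm_apply_eq_of_inner_eq {π : A →⋆ₐ[ℂ] H →L[ℂ] H} {ξ : H}
    {π' : A →⋆ₐ[ℂ] H' →L[ℂ] H'} {ξ' : H'}
    (hinner : ∀ a, inner ℂ ξ (π a ξ) = inner ℂ ξ' (π' a ξ')) (a : A) :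
    ‖π a ξ‖ = ‖π' a ξ'‖ := by
  rw [norm_eq_sqrt_re_inner (𝕜 := ℂ), norm_eq_sqrt_re_inner (𝕜 := ℂ),
    inner_apply_apply_eq_inner_apply_star_mul, inner_apply_apply_eq_inner_apply_star_mul,
    hinner]

theorem comp_eq_comp_of_apply_cyclic_eq {π : A →⋆ₐ[ℂ] H →L[ℂ] H} {ξ : H}
    {π' : A →⋆ₐ[ℂ] H' →L[ℂ] H'} {ξ' : H'}
    (hdense : Dense (Submodule.span ℂ (Set.range fun a => π a ξ) : Set H))
    {U : H →L[ℂ] H'} (hU : ∀ a, U (π a ξ) = π' a ξ') (a : A) :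
    U ∘L π a = π' a ∘L U := by
  refine ContinuousLinearMap.ext_on hdense ?_
  rintro _ ⟨b, rfl⟩
  simp only [ContinuousLinearMap.comp_apply, hU, ← mul_apply_eq_comp, ← map_mul]

end Cyclic

theorem gns_uniqueness_general {A : Type*} [NormedRing A] [StarRing A] [CStarRing A]
    [NormedAlgebra ℂ A] [StarModule ℂ A] [CompleteSpace A]
    (Ω : A →ₗ[ℂ] ℂ)
    (H : Type*) [NormedAddCommGroup H] [InnerProductSpace ℂ H] [CompleteSpace H]
    (π : A →⋆ₐ[ℂ] H →L[ℂ] H) (ξ : H)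
    (H' : Type*) [NormedAddCommGroup H'] [InnerProductSpace ℂ H'] [CompleteSpace H']
    (π' : A →⋆ₐ[ℂ] H' →L[ℂ] H') (ξ' : H')
    (h : IsGNSTriple Ω H π ξ) (h' : IsGNSTriple Ω H' π' ξ') :
    ∃ U : H ≃ₗᵢ[ℂ] H', U ξ = ξ' ∧ ∀ (a : A) (x : H), U (π a x) = π' a (U x) := by
  obtain ⟨-, hΩ, hdense⟩ := h
  obtain ⟨-, hΩ', hdense'⟩ := h'
  have hnorm : ∀ a, ‖orbitMap π' ξ' a‖ = ‖orbitMap π ξ a‖ := fun a =>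
    norm_apply_eq_of_inner_eq (fun a => (hΩ' a).symm.trans (hΩ a)) a
  obtain ⟨U, hU⟩ := exists_linearIsometryEquiv_apply_eq_of_norm_eq
    (L := orbitMap π ξ) (L' := orbitMap π' ξ')
    (denseRange_orbitMap hdense) (denseRange_orbitMap hdense') hnorm
  have hUπ := comp_eq_comp_of_apply_cyclic_eq
    (U := U.toLinearIsometry.toContinuousLinearMap) hdense hU
  refine ⟨U, by simpa using hU 1, fun a x => ?_⟩
  exact DFunLike.congr_fun (hUπ a) x

/-- **Uniqueness of the GNS representation**: two GNS triples for the same state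
are unitarily equivalent, via a unitary mapping cyclic vector to cyclic vector and
intertwining the representations. -/
theorem gns_uniqueness {A : Type*} [NormedRing A] [StarRing A] [CStarRing A]
    [NormedAlgebra ℂ A] [StarModule ℂ A] [CompleteSpace A]
    (Ω : A →ₗ[ℂ] ℂ) (hΩ : IsState Ω)
    (H : Type*) [NormedAddCommGroup H] [InnerProductSpace ℂ H] [CompleteSpace H]
    (π : A →⋆ₐ[ℂ] H →L[ℂ] H) (ξ : H)
    (H' : Type*) [NormedAddCommGroup H'] [InnerProductSpace ℂ H'] [CompleteSpace H']
    (π' : A →⋆ₐ[ℂ] H' →L[ℂ] H') (ξ' : H')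
    (h : IsGNSTriple Ω H π ξ) (h' : IsGNSTriple Ω H' π' ξ') :
    ∃ U : H ≃ₗᵢ[ℂ] H', U ξ = ξ' ∧ ∀ (a : A) (x : H), U (π a x) = π' a (U x) :=
  gns_uniqueness_general Ω H π ξ H' π' ξ' h h'
end

section
/- Let (A₁, A₂) be a commuting algebraic bipartition of a unital C*-algebra A, let Ω be a state on A satisfying Ω(α₁α₂) = Ω(α₁)Ω(α₂) for all α₁ ∈ A₁ and α₂ ∈ A₂, and let (H, π, ξ) be a GNS triple for Ω. Then the linear span of the set {π(α₁)π(α₂)ξ : α₁ ∈ A₁, α₂ ∈ A₂} is dense in H, and for every nonzero vector φ = π(α₁)π(α₂)ξ of this form the normalized vector state ω(a) = ⟨φ, π(a)φ⟩/‖φ‖² satisfies the product property ω(β₁β₂) = ω(β₁)ω(β₂) for all β₁ ∈ A₁, β₂ ∈ A₂ (hence is (A₁,A₂)-separable). -/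
open scoped ComplexOrder

/-! Vectors `π c ξ` (with `c = α₁ α₂`) give product states because
`⟪π c ξ, π b π c ξ⟫ = Ω (c⋆ b c)`, and for `b = β₁ β₂` the commutation of the two halves
rearranges `c⋆ b c` into `(α₁⋆ β₁ α₁) (α₂⋆ β₂ α₂)`, on which `Ω` factorizes. Density holds because
the products `α₁ α₂` span `A`, so the vectors `π α₁ π α₂ ξ` span `π(A) ξ`. -/

theorem LinearMap.dense_span_image_of_span_eq_top {R M N : Type*} [Semiring R]
    [AddCommMonoid M] [Module R M] [AddCommMonoid N] [Module R N] [TopologicalSpace N]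
    (f : M →ₗ[R] N) {S : Set M} (hS : Submodule.span R S = ⊤)
    (hf : Dense (Submodule.span R (Set.range f) : Set N)) :
    Dense (Submodule.span R (f '' S) : Set N) := by
  rwa [← Submodule.map_span, hS, ← LinearMap.range_eq_map, ← Submodule.span_eq (LinearMap.range f),
    LinearMap.coe_range]

theorem star_mul_mul_mul_eq_of_commute {M : Type*} [Monoid M] [StarMul M] {a₁ a₂ b₁ b₂ : M}
    (h₁ : Commute (star a₂) (star a₁)) (h₂ : Commute (star a₂) b₁)
    (h₃ : Commute (star a₂) a₁) (h₄ : Commute b₂ a₁) :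
    star (a₁ * a₂) * (b₁ * b₂) * (a₁ * a₂) = (star a₁ * b₁ * a₁) * (star a₂ * b₂ * a₂) := by
  simp only [star_mul, mul_assoc]
  rw [h₁.left_comm, h₂.left_comm, h₄.left_comm, h₃.left_comm]

theorem inner_apply_map_apply {𝕜 A H : Type*} [RCLike 𝕜] [Semiring A] [StarRing A] [Algebra 𝕜 A]
    [NormedAddCommGroup H] [InnerProductSpace 𝕜 H] [CompleteSpace H]
    (π : A →⋆ₐ[𝕜] H →L[𝕜] H) (ξ : H) (b c : A) :
    inner 𝕜 (π c ξ) (π b (π c ξ)) = inner 𝕜 ξ (π (star c * b * c) ξ) := by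
  rw [map_mul, map_mul, map_star, ContinuousLinearMap.star_eq_adjoint]
  exact (ContinuousLinearMap.adjoint_inner_right _ _ _).symm

section Bipartition

variable {R A : Type*} [CommSemiring R] [StarRing R] [Semiring A] [StarRing A] [Algebra R A]
  [StarModule R A] {A₁ A₂ : StarSubalgebra R A}

theorem StarSubalgebra.star_mul_mul_mul_eq_of_commute
    (h_comm : ∀ x ∈ A₁, ∀ y ∈ A₂, x * y = y * x) {a₁ b₁ a₂ b₂ : A}
    (ha₁ : a₁ ∈ A₁) (hb₁ : b₁ ∈ A₁) (ha₂ : a₂ ∈ A₂) (hb₂ : b₂ ∈ A₂) :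
    star (a₁ * a₂) * (b₁ * b₂) * (a₁ * a₂) = (star a₁ * b₁ * a₁) * (star a₂ * b₂ * a₂) :=
  _root_.star_mul_mul_mul_eq_of_commute
    (h_comm _ (star_mem ha₁) _ (star_mem ha₂)).symm (h_comm _ hb₁ _ (star_mem ha₂)).symm
    (h_comm _ ha₁ _ (star_mem ha₂)).symm (h_comm _ ha₁ _ hb₂).symm

theorem apply_mul_mul_apply_one_of_eq_sandwich {S : Type*} [CommMonoid S] (Ω ω : A → S)
    (h_comm : ∀ x ∈ A₁, ∀ y ∈ A₂, x * y = y * x)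
    (hprod : ∀ α₁ ∈ A₁, ∀ α₂ ∈ A₂, Ω (α₁ * α₂) = Ω α₁ * Ω α₂) {a₁ a₂ : A}
    (ha₁ : a₁ ∈ A₁) (ha₂ : a₂ ∈ A₂) (hω : ∀ b, ω b = Ω (star (a₁ * a₂) * b * (a₁ * a₂)))
    {b₁ b₂ : A} (hb₁ : b₁ ∈ A₁) (hb₂ : b₂ ∈ A₂) :
    ω (b₁ * b₂) * ω 1 = ω b₁ * ω b₂ := by
  have hsplit {b₁ b₂ : A} (hb₁ : b₁ ∈ A₁) (hb₂ : b₂ ∈ A₂) :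
      ω (b₁ * b₂) = Ω (star a₁ * b₁ * a₁) * Ω (star a₂ * b₂ * a₂) := by
    rw [hω, StarSubalgebra.star_mul_mul_mul_eq_of_commute h_comm ha₁ hb₁ ha₂ hb₂]
    exact hprod _ (mul_mem (mul_mem (star_mem ha₁) hb₁) ha₁)
      _ (mul_mem (mul_mem (star_mem ha₂) hb₂) ha₂)
  have h₀ := hsplit (one_mem A₁) (one_mem A₂)
  have h₁ := hsplit hb₁ (one_mem A₂)
  have h₂ := hsplit (one_mem A₁) hb₂
  rw [mul_one] at h₀ h₁
  rw [one_mul] at h₂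
  rw [hsplit hb₁ hb₂, h₀, h₁, h₂]
  ac_rfl

end Bipartition

theorem separable_basis_of_GNS_general
    {A : Type*} [NormedRing A] [StarRing A]
    [NormedAlgebra ℂ A] [StarModule ℂ A]
    (A₁ A₂ : StarSubalgebra ℂ A)
    -- `(A₁, A₂)` is a commuting algebraic bipartition:
    (h_comm : ∀ x ∈ A₁, ∀ y ∈ A₂, x * y = y * x)
    (h_gen : ∀ a : A, a ∈ Submodule.span ℂ {x : A | ∃ y ∈ A₁, ∃ z ∈ A₂, x = y * z})
    (Ω : A →ₗ[ℂ] ℂ)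
    (hprod : ∀ α₁ ∈ A₁, ∀ α₂ ∈ A₂, Ω (α₁ * α₂) = Ω α₁ * Ω α₂)
    -- `(H, π, ξ)` is a GNS triple for `Ω`:
    (H : Type*) [NormedAddCommGroup H] [InnerProductSpace ℂ H] [CompleteSpace H]
    (π : A →⋆ₐ[ℂ] H →L[ℂ] H) (ξ : H)
    (hrep : ∀ a : A, Ω a = (inner ℂ ξ (π a ξ) : ℂ))
    (hcyc : Dense (↑(Submodule.span ℂ (Set.range fun a : A => π a ξ)) : Set H)) :
    Dense (↑(Submodule.span ℂ
        {v : H | ∃ α₁ ∈ A₁, ∃ α₂ ∈ A₂, v = π α₁ (π α₂ ξ)}) : Set H) ∧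
    ∀ α₁ ∈ A₁, ∀ α₂ ∈ A₂, ∀ φ : H, φ = π α₁ (π α₂ ξ) → φ ≠ 0 →
      ∀ β₁ ∈ A₁, ∀ β₂ ∈ A₂,
        (inner ℂ φ (π (β₁ * β₂) φ) : ℂ) / (‖φ‖ ^ 2 : ℝ) =
          ((inner ℂ φ (π β₁ φ) : ℂ) / (‖φ‖ ^ 2 : ℝ)) *
          ((inner ℂ φ (π β₂ φ) : ℂ) / (‖φ‖ ^ 2 : ℝ)) := by
  constructor
  · let evalξ : A →ₗ[ℂ] H := (ContinuousLinearMap.apply ℂ H ξ).toLinearMap ∘ₗ π.toLinearMap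
    refine (evalξ.dense_span_image_of_span_eq_top (Submodule.eq_top_iff'.mpr h_gen) hcyc).mono
      (Submodule.span_mono ?_)
    rintro _ ⟨_, ⟨α₁, hα₁, α₂, hα₂, rfl⟩, rfl⟩
    exact ⟨α₁, hα₁, α₂, hα₂, by simp [evalξ]⟩
  · rintro α₁ hα₁ α₂ hα₂ φ rfl hφ β₁ hβ₁ β₂ hβ₂
    have hω (b : A) : inner ℂ (π α₁ (π α₂ ξ)) (π b (π α₁ (π α₂ ξ))) =
        Ω (star (α₁ * α₂) * b * (α₁ * α₂)) := by
      rw [hrep, ← inner_apply_map_apply, map_mul, mul_apply_eq_comp]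
    have hnorm : inner ℂ (π α₁ (π α₂ ξ)) (π 1 (π α₁ (π α₂ ξ))) =
        ((‖π α₁ (π α₂ ξ)‖ ^ 2 : ℝ) : ℂ) := by
      rw [map_one, one_apply_eq_self, inner_self_eq_norm_sq_to_K]
      norm_cast
    have hnorm_ne : ((‖π α₁ (π α₂ ξ)‖ ^ 2 : ℝ) : ℂ) ≠ 0 := by simpa using hφ
    have key := apply_mul_mul_apply_one_of_eq_sandwich _ _ h_comm hprod hα₁ hα₂ hω hβ₁ hβ₂
    rw [hnorm] at key
    field_simp
    exact key

/-- **Corollary 1**: given a commuting algebraic bipartition `(A₁, A₂)` of `A`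
and a product (separable) state `Ω` with GNS triple `(H, π, ξ)`, the vectors
`π α₁ π α₂ ξ` (`α₁ ∈ A₁`, `α₂ ∈ A₂`) span a dense subspace of `H`, and the
normalized vector state of every nonzero such vector is a product state on the
bipartition (hence separable). -/
theorem separable_basis_of_GNS
    {A : Type*} [NormedRing A] [StarRing A] [CStarRing A]
    [NormedAlgebra ℂ A] [StarModule ℂ A] [CompleteSpace A]
    (A₁ A₂ : StarSubalgebra ℂ A)
    -- `(A₁, A₂)` is a commuting algebraic bipartition:
    (h_inter : ∀ x : A, x ∈ A₁ → x ∈ A₂ → ∃ c : ℂ, x = algebraMap ℂ A c)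
    (h_comm : ∀ x ∈ A₁, ∀ y ∈ A₂, x * y = y * x)
    (h_gen : ∀ a : A, a ∈ Submodule.span ℂ {x : A | ∃ y ∈ A₁, ∃ z ∈ A₂, x = y * z})
    (Ω : A →ₗ[ℂ] ℂ) (hΩ : IsState Ω)
    (hprod : ∀ α₁ ∈ A₁, ∀ α₂ ∈ A₂, Ω (α₁ * α₂) = Ω α₁ * Ω α₂)
    -- `(H, π, ξ)` is a GNS triple for `Ω`:
    (H : Type*) [NormedAddCommGroup H] [InnerProductSpace ℂ H] [CompleteSpace H]
    (π : A →⋆ₐ[ℂ] H →L[ℂ] H) (ξ : H)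
    (hξ : ‖ξ‖ = 1)
    (hrep : ∀ a : A, Ω a = (inner ℂ ξ (π a ξ) : ℂ))
    (hcyc : Dense (↑(Submodule.span ℂ (Set.range fun a : A => π a ξ)) : Set H)) :
    Dense (↑(Submodule.span ℂ
        {v : H | ∃ α₁ ∈ A₁, ∃ α₂ ∈ A₂, v = π α₁ (π α₂ ξ)}) : Set H) ∧
    ∀ α₁ ∈ A₁, ∀ α₂ ∈ A₂, ∀ φ : H, φ = π α₁ (π α₂ ξ) → φ ≠ 0 →
      ∀ β₁ ∈ A₁, ∀ β₂ ∈ A₂,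
        (inner ℂ φ (π (β₁ * β₂) φ) : ℂ) / (‖φ‖ ^ 2 : ℝ) =
          ((inner ℂ φ (π β₁ φ) : ℂ) / (‖φ‖ ^ 2 : ℝ)) *
          ((inner ℂ φ (π β₂ φ) : ℂ) / (‖φ‖ ^ 2 : ℝ)) :=
  separable_basis_of_GNS_general A₁ A₂ h_comm h_gen Ω hprod H π ξ hrep hcyc
end

section
/- Let A be a unital C*-algebra with grading automorphism θ and let (A₁, A₂) be a graded bipartition of A. Let Ω₁ and Ω₂ be states on A, and suppose there exists a state Ω on A such that Ω(α₁α₂) = Ω₁(α₁)Ω₂(α₂) for all α₁ ∈ A₁ and α₂ ∈ A₂. Then either Ω₁(α) = 0 for every odd α ∈ A₁, or Ω₂(α) = 0 for every odd α ∈ A₂. -/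
/-!
States are hermitian, `Ω (star a) = conj (Ω a)`. If `x ∈ A₁` and `y ∈ A₂` are odd, so are
`star x` and `star y`, and they anticommute; hence
`conj (Ω₁ x * Ω₂ y) = Ω (star y * star x) = -Ω (star x * star y) = -conj (Ω₁ x * Ω₂ y)`,
so `Ω₁ x * Ω₂ y = 0`.
-/

open scoped ComplexOrder

/- Polarization: positivity on `star (1 + a) * (1 + a)` and `star (1 + I • a) * (1 + I • a)`
makes `Ω a + Ω (star a)` real and `Ω a - Ω (star a)` purely imaginary. -/
theorem map_star_of_star_mul_self_nonneg {A : Type*} [Ring A] [StarRing A] [Algebra ℂ A]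
    [StarModule ℂ A] (Ω : A →ₗ[ℂ] ℂ) (hΩ : ∀ a : A, 0 ≤ Ω (star a * a)) (a : A) :
    Ω (star a) = starRingEnd ℂ (Ω a) := by
  have im_eq_zero (b : A) : (Ω (star b * b)).im = 0 := (Complex.nonneg_iff.mp (hΩ b)).2.symm
  have expand_one : star (1 + a) * (1 + a) = 1 + a + star a + star a * a := by
    rw [star_add, star_one]; noncomm_ring
  have expand_I : star (1 + Complex.I • a) * (1 + Complex.I • a)
      = 1 + Complex.I • a - Complex.I • star a + star a * a := by
    rw [star_add, star_one, star_smul, Complex.star_def, Complex.conj_I, add_mul, mul_add,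
      mul_add, one_mul, one_mul, mul_one, smul_mul_smul_comm, neg_mul, Complex.I_mul_I, neg_neg,
      one_smul, neg_smul]
    abel
  have h_one := im_eq_zero 1
  have h_a := im_eq_zero a
  have h_sum := im_eq_zero (1 + a)
  have h_diff := im_eq_zero (1 + Complex.I • a)
  rw [expand_one] at h_sum
  rw [expand_I] at h_diff
  rw [star_one, one_mul] at h_one
  simp only [map_add, map_sub, map_smul, smul_eq_mul, Complex.add_im, Complex.sub_im,
    Complex.mul_im, Complex.I_re, Complex.I_im, h_one, h_a] at h_sum h_diff
  apply Complex.ext <;> simp only [Complex.conj_re, Complex.conj_im] <;> linarith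

theorem mul_eq_zero_of_star_anticommute {A : Type*} [Ring A] [StarRing A] [Module ℂ A]
    {Ω Ω₁ Ω₂ : A →ₗ[ℂ] ℂ} (hΩ : ∀ a, Ω (star a) = starRingEnd ℂ (Ω a))
    (hΩ₁ : ∀ a, Ω₁ (star a) = starRingEnd ℂ (Ω₁ a))
    (hΩ₂ : ∀ a, Ω₂ (star a) = starRingEnd ℂ (Ω₂ a)) {x y : A}
    (hprod : Ω (x * y) = Ω₁ x * Ω₂ y)
    (hprod_star : Ω (star x * star y) = Ω₁ (star x) * Ω₂ (star y))
    (hanti : star x * star y = -(star y * star x)) :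
    Ω₁ x * Ω₂ y = 0 := by
  have h : starRingEnd ℂ (Ω₁ x * Ω₂ y) = -starRingEnd ℂ (Ω₁ x * Ω₂ y) :=
    calc starRingEnd ℂ (Ω₁ x * Ω₂ y)
        = Ω (star y * star x) := by rw [← hprod, ← hΩ, star_mul]
      _ = -Ω (star x * star y) := by rw [hanti, map_neg, neg_neg]
      _ = -starRingEnd ℂ (Ω₁ x * Ω₂ y) := by rw [hprod_star, hΩ₁, hΩ₂, map_mul]
  exact (map_eq_zero (starRingEnd ℂ)).mp (self_eq_neg.mp h)

theorem product_state_vanishes_on_odd_general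
    {A : Type*} [NormedRing A] [StarRing A]
    [NormedAlgebra ℂ A] [StarModule ℂ A]
    -- the grading automorphism:
    (θ : A ≃⋆ₐ[ℂ] A)
    (A₁ A₂ : StarSubalgebra ℂ A)
    -- `(A₁, A₂)` is a graded bipartition:
    (h_anti : ∀ x ∈ A₁, θ x = -x → ∀ y ∈ A₂, θ y = -y → x * y = -(y * x))
    -- the states:
    (Ω₁ Ω₂ : A →ₗ[ℂ] ℂ) (hΩ₁ : IsState Ω₁) (hΩ₂ : IsState Ω₂)
    (Ω : A →ₗ[ℂ] ℂ) (hΩ : IsState Ω)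
    (hprod : ∀ α₁ ∈ A₁, ∀ α₂ ∈ A₂, Ω (α₁ * α₂) = Ω₁ α₁ * Ω₂ α₂) :
    (∀ α ∈ A₁, θ α = -α → Ω₁ α = 0) ∨ (∀ α ∈ A₂, θ α = -α → Ω₂ α = 0) := by
  by_contra! h
  obtain ⟨⟨x, hx, hx_odd, hx_ne⟩, ⟨y, hy, hy_odd, hy_ne⟩⟩ := h
  have star_odd {z : A} (hz : θ z = -z) : θ (star z) = -star z := by
    rw [map_star, hz, star_neg]
  have herm {Ψ : A →ₗ[ℂ] ℂ} (hΨ : IsState Ψ) : ∀ a, Ψ (star a) = starRingEnd ℂ (Ψ a) :=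
    map_star_of_star_mul_self_nonneg Ψ hΨ.1
  exact mul_ne_zero hx_ne hy_ne <| mul_eq_zero_of_star_anticommute (herm hΩ) (herm hΩ₁) (herm hΩ₂)
    (hprod x hx y hy) (hprod _ (star_mem hx) _ (star_mem hy))
    (h_anti _ (star_mem hx) (star_odd hx_odd) _ (star_mem hy) (star_odd hy_odd))

/-- **Lemma 2**: let `(A₁, A₂)` be a graded bipartition of a unital C*-algebra `A`
with grading automorphism `θ`, and let `Ω₁`, `Ω₂` be states on `A`.  If the
product functional `α₁α₂ ↦ Ω₁(α₁)Ω₂(α₂)` extends to a state `Ω` on `A`, then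
`Ω₁` vanishes on the odd part of `A₁` or `Ω₂` vanishes on the odd part of `A₂`. -/
theorem product_state_vanishes_on_odd
    {A : Type*} [NormedRing A] [StarRing A] [CStarRing A]
    [NormedAlgebra ℂ A] [StarModule ℂ A] [CompleteSpace A]
    -- the grading automorphism:
    (θ : A ≃⋆ₐ[ℂ] A) (hθ : ∀ a : A, θ (θ a) = a)
    (A₁ A₂ : StarSubalgebra ℂ A)
    -- `(A₁, A₂)` is a graded bipartition:
    (h_inv₁ : ∀ x ∈ A₁, θ x ∈ A₁) (h_inv₂ : ∀ x ∈ A₂, θ x ∈ A₂)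
    (h_inter : ∀ x : A, x ∈ A₁ → x ∈ A₂ → ∃ c : ℂ, x = algebraMap ℂ A c)
    (h_gen : ∀ a : A, a ∈ Submodule.span ℂ {x : A | ∃ y ∈ A₁, ∃ z ∈ A₂, x = y * z})
    (h_comm₁ : ∀ x ∈ A₁, θ x = x → ∀ y ∈ A₂, x * y = y * x)
    (h_comm₂ : ∀ y ∈ A₂, θ y = y → ∀ x ∈ A₁, x * y = y * x)
    (h_anti : ∀ x ∈ A₁, θ x = -x → ∀ y ∈ A₂, θ y = -y → x * y = -(y * x))
    -- the states:
    (Ω₁ Ω₂ : A →ₗ[ℂ] ℂ) (hΩ₁ : IsState Ω₁) (hΩ₂ : IsState Ω₂)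
    (Ω : A →ₗ[ℂ] ℂ) (hΩ : IsState Ω)
    (hprod : ∀ α₁ ∈ A₁, ∀ α₂ ∈ A₂, Ω (α₁ * α₂) = Ω₁ α₁ * Ω₂ α₂) :
    (∀ α ∈ A₁, θ α = -α → Ω₁ α = 0) ∨ (∀ α ∈ A₂, θ α = -α → Ω₂ α = 0) :=
  product_state_vanishes_on_odd_general θ A₁ A₂ h_anti Ω₁ Ω₂ hΩ₁ hΩ₂ Ω hΩ hprod
end

section
/- Let A be a unital C*-algebra with grading automorphism θ and let (A₁, A₂) be a graded bipartition of A. If Ω is a state on A with Ω(α₁α₂) = Ω(α₁)Ω(α₂) for all α₁ ∈ A₁ and α₂ ∈ A₂, then either Ω(α) = 0 for every odd α ∈ A₁, or Ω(α) = 0 for every odd α ∈ A₂. -/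
/-!
Ω is hermitian, so the product property on `(star α₁, star α₂)` gives it also in the reversed
order: `Ω (α₂ * α₁) = Ω α₁ * Ω α₂`. For odd `α₁ ∈ A₁`, `α₂ ∈ A₂` we have `α₁ α₂ = -α₂ α₁`, hence
`Ω α₁ * Ω α₂ = -(Ω α₁ * Ω α₂)`, so one of the two factors vanishes.
-/

open scoped ComplexOrder

namespace LinearMap

variable {A : Type*} [Ring A] [StarRing A] [Algebra ℂ A] {Ω : A →ₗ[ℂ] ℂ}

lemma conj_map_star_mul_self (hpos : ∀ a : A, 0 ≤ Ω (star a * a)) (a : A) :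
    starRingEnd ℂ (Ω (star a * a)) = Ω (star a * a) :=
  Complex.conj_eq_iff_im.mpr (Complex.nonneg_iff.mp (hpos a)).2.symm

/-- Expand `Ω (star (1 + b) * (1 + b))`, whose value is real. -/
lemma conj_add_map_star (hpos : ∀ a : A, 0 ≤ Ω (star a * a)) (b : A) :
    starRingEnd ℂ (Ω b + Ω (star b)) = Ω b + Ω (star b) := by
  have expand : star (1 + b) * (1 + b) = star 1 * 1 + b + star b + star b * b := by
    simp only [star_add, star_one, add_mul, mul_add, one_mul, mul_one]
    abel
  have h := conj_map_star_mul_self hpos (1 + b)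
  rw [expand] at h
  simp only [map_add] at h ⊢
  linear_combination h - conj_map_star_mul_self hpos 1 - conj_map_star_mul_self hpos b

lemma map_star_eq_conj [StarModule ℂ A] (hpos : ∀ a : A, 0 ≤ Ω (star a * a)) (b : A) :
    Ω (star b) = starRingEnd ℂ (Ω b) := by
  have hb := conj_add_map_star hpos b
  have hIb := conj_add_map_star hpos (Complex.I • b)
  simp only [star_smul, Complex.star_def, Complex.conj_I, neg_smul, map_neg, map_smul,
    smul_eq_mul, map_mul, neg_mul, map_add] at hb hIb
  linear_combination (norm := ring_nf) (-hb - Complex.I * hIb) / 2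
  simp only [Complex.I_sq]
  ring

lemma map_mul_swap_of_map_star_mul_star
    (hherm : ∀ x : A, Ω (star x) = starRingEnd ℂ (Ω x)) {a b : A}
    (hprod : Ω (star a * star b) = Ω (star a) * Ω (star b)) :
    Ω (b * a) = Ω a * Ω b := by
  apply (starRingEnd ℂ).injective
  rw [← hherm, star_mul, hprod, hherm, hherm, map_mul]

lemma apply_mul_apply_eq_zero_of_anticommute
    (hherm : ∀ x : A, Ω (star x) = starRingEnd ℂ (Ω x)) {a b : A}
    (hprod : Ω (a * b) = Ω a * Ω b)
    (hprod_star : Ω (star a * star b) = Ω (star a) * Ω (star b))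
    (hanti : a * b = -(b * a)) :
    Ω a * Ω b = 0 := by
  have hswap := map_mul_swap_of_map_star_mul_star hherm hprod_star
  have hneg : Ω a * Ω b = -(Ω a * Ω b) :=
    calc Ω a * Ω b = Ω (a * b) := hprod.symm
      _ = -Ω (b * a) := by rw [hanti, map_neg]
      _ = -(Ω a * Ω b) := by rw [hswap]
  linear_combination hneg / 2

end LinearMap

theorem product_state_vanishes_on_odd_component_general
    {A : Type*} [NormedRing A] [StarRing A]
    [NormedAlgebra ℂ A] [StarModule ℂ A]
    -- the grading automorphism:
    (θ : A ≃⋆ₐ[ℂ] A)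
    (A₁ A₂ : StarSubalgebra ℂ A)
    -- `(A₁, A₂)` is a graded bipartition:
    (h_anti : ∀ x ∈ A₁, θ x = -x → ∀ y ∈ A₂, θ y = -y → x * y = -(y * x))
    -- the state:
    (Ω : A →ₗ[ℂ] ℂ) (hΩ : IsState Ω)
    (hprod : ∀ α₁ ∈ A₁, ∀ α₂ ∈ A₂, Ω (α₁ * α₂) = Ω α₁ * Ω α₂) :
    (∀ α ∈ A₁, θ α = -α → Ω α = 0) ∨ (∀ α ∈ A₂, θ α = -α → Ω α = 0) := by
  by_contra! ⟨⟨a, ha, ha_odd, ha_ne⟩, ⟨b, hb, hb_odd, hb_ne⟩⟩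
  have hherm := fun x ↦ LinearMap.map_star_eq_conj hΩ.1 x
  exact mul_ne_zero ha_ne hb_ne <| LinearMap.apply_mul_apply_eq_zero_of_anticommute hherm
    (hprod a ha b hb) (hprod _ (star_mem ha) _ (star_mem hb)) (h_anti a ha ha_odd b hb hb_odd)

/-- A product state on a graded bipartition `(A₁, A₂)` of a unital C*-algebra `A`
(i.e. `Ω(α₁α₂) = Ω(α₁)Ω(α₂)` on local operators) must vanish on the odd part of
`A₁` or on the odd part of `A₂`. -/
theorem product_state_vanishes_on_odd_component
    {A : Type*} [NormedRing A] [StarRing A] [CStarRing A]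
    [NormedAlgebra ℂ A] [StarModule ℂ A] [CompleteSpace A]
    -- the grading automorphism:
    (θ : A ≃⋆ₐ[ℂ] A) (hθ : ∀ a : A, θ (θ a) = a)
    (A₁ A₂ : StarSubalgebra ℂ A)
    -- `(A₁, A₂)` is a graded bipartition:
    (h_inv₁ : ∀ x ∈ A₁, θ x ∈ A₁) (h_inv₂ : ∀ x ∈ A₂, θ x ∈ A₂)
    (h_inter : ∀ x : A, x ∈ A₁ → x ∈ A₂ → ∃ c : ℂ, x = algebraMap ℂ A c)
    (h_gen : ∀ a : A, a ∈ Submodule.span ℂ {x : A | ∃ y ∈ A₁, ∃ z ∈ A₂, x = y * z})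
    (h_comm₁ : ∀ x ∈ A₁, θ x = x → ∀ y ∈ A₂, x * y = y * x)
    (h_comm₂ : ∀ y ∈ A₂, θ y = y → ∀ x ∈ A₁, x * y = y * x)
    (h_anti : ∀ x ∈ A₁, θ x = -x → ∀ y ∈ A₂, θ y = -y → x * y = -(y * x))
    -- the state:
    (Ω : A →ₗ[ℂ] ℂ) (hΩ : IsState Ω)
    (hprod : ∀ α₁ ∈ A₁, ∀ α₂ ∈ A₂, Ω (α₁ * α₂) = Ω α₁ * Ω α₂) :
    (∀ α ∈ A₁, θ α = -α → Ω α = 0) ∨ (∀ α ∈ A₂, θ α = -α → Ω α = 0) :=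
  product_state_vanishes_on_odd_component_general θ A₁ A₂ h_anti Ω hΩ hprod
end

section
/- Let A be a unital C*-algebra with grading automorphism θ, let (A₁, A₂) be a graded bipartition of A, and let Ω be a state on A. If there exist an odd element α₁ ∈ A₁ and an odd element α₂ ∈ A₂ with Ω(α₁α₂) ≠ 0, then Ω is not (A₁,A₂)-separable; equivalently, every (A₁,A₂)-separable state vanishes on all products α₁α₂ with α₁ ∈ A₁ odd and α₂ ∈ A₂ odd. -/
open scoped ComplexOrder

/-- Fermionic separability of a state `Ω` with respect to the bipartition
`(A₁, A₂)`: `Ω` is a convex combination of product functionals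
`α₁α₂ ↦ Ω_k⁽¹⁾(α₁)Ω_k⁽²⁾(α₂)`, each of which extends to a state on `A`. -/
def IsSepStateF {A : Type*} [Ring A] [StarRing A] [Algebra ℂ A] [StarModule ℂ A]
    (A₁ A₂ : StarSubalgebra ℂ A) (Ω : A →ₗ[ℂ] ℂ) : Prop :=
  ∃ (n : ℕ) (lam : Fin n → ℝ) (Ω₁ Ω₂ : Fin n → (A →ₗ[ℂ] ℂ)),
    (∀ k, 0 ≤ lam k) ∧ (∑ k, lam k) = 1 ∧
    (∀ k, IsState (Ω₁ k)) ∧ (∀ k, IsState (Ω₂ k)) ∧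
    (∀ k, ∃ ω : A →ₗ[ℂ] ℂ, IsState ω ∧
      ∀ α₁ ∈ A₁, ∀ α₂ ∈ A₂, ω (α₁ * α₂) = Ω₁ k α₁ * Ω₂ k α₂) ∧
    ∀ α₁ ∈ A₁, ∀ α₂ ∈ A₂,
      Ω (α₁ * α₂) = ∑ k, (lam k : ℂ) * Ω₁ k α₁ * Ω₂ k α₂

/-!
Positive functionals are hermitian, and with `a ∈ A₁`, `b ∈ A₂` odd so are `star a`, `star b`,
which therefore anticommute. For a product state `ω = φ₁ ⊗ φ₂` this gives
`φ₁ (star a) * φ₂ (star b) = ω (star a * star b) = -ω (star (a * b)) = -conj (φ₁ a * φ₂ b)`,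
which is `-(φ₁ (star a) * φ₂ (star b))`. So each product state, hence each convex combination of
them, vanishes on `a * b`.
-/

section

variable {A : Type*} [Ring A] [StarRing A] [Algebra ℂ A]

/-- Polarization: `Ω (star (1 + c • x) * (1 + c • x))` is real for `c = 1` and `c = I`. -/
theorem map_star_of_nonneg_star_mul_self [StarModule ℂ A] {Ω : A →ₗ[ℂ] ℂ}
    (hΩ : ∀ a : A, 0 ≤ Ω (star a * a)) (x : A) : Ω (star x) = star (Ω x) := by
  have im_eq_zero (a : A) : (Ω (star a * a)).im = 0 := (Complex.nonneg_iff.mp (hΩ a)).2.symm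
  have expand (c : ℂ) : Ω (star (1 + c • x) * (1 + c • x))
      = Ω (star 1 * 1) + (star c * Ω (star x) + c * Ω x) + star c * c * Ω (star x * x) := by
    simp only [star_add, star_one, star_smul, add_mul, mul_add, one_mul, mul_one,
      smul_mul_assoc, mul_smul_comm, map_add, map_smul, smul_eq_mul]
    ring
  have h1 := congrArg Complex.im (expand 1)
  have hI := congrArg Complex.im (expand Complex.I)
  simp only [Complex.add_im, im_eq_zero] at h1 hI
  apply Complex.ext <;>
    simp [Complex.mul_im, Complex.conj_I, im_eq_zero x] at h1 hI ⊢ <;> linarith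

theorem IsState.map_star [StarModule ℂ A] {Ω : A →ₗ[ℂ] ℂ} (hΩ : IsState Ω) (x : A) :
    Ω (star x) = star (Ω x) :=
  map_star_of_nonneg_star_mul_self hΩ.1 x

theorem mul_eq_zero_of_star_anticommute_s7 {ω φ₁ φ₂ : A →ₗ[ℂ] ℂ}
    (hω : ∀ x, ω (star x) = star (ω x)) (hφ₁ : ∀ x, φ₁ (star x) = star (φ₁ x))
    (hφ₂ : ∀ x, φ₂ (star x) = star (φ₂ x)) {a b : A}
    (hab : ω (a * b) = φ₁ a * φ₂ b) (hab' : ω (star a * star b) = φ₁ (star a) * φ₂ (star b))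
    (hanti : star a * star b = -(star b * star a)) :
    φ₁ a * φ₂ b = 0 := by
  have h : φ₁ (star a) * φ₂ (star b) = -(φ₁ (star a) * φ₂ (star b)) :=
    calc φ₁ (star a) * φ₂ (star b) = ω (star a * star b) := hab'.symm
      _ = -ω (star (a * b)) := by rw [hanti, star_mul, map_neg]
      _ = -star (φ₁ a * φ₂ b) := by rw [hω, hab]
      _ = -(φ₁ (star a) * φ₂ (star b)) := by rw [star_mul', hφ₁, hφ₂]
  rwa [self_eq_neg, hφ₁, hφ₂, ← star_mul', star_eq_zero] at h

theorem IsSepStateF.map_mul_eq_zero_of_star_anticommute [StarModule ℂ A]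
    {A₁ A₂ : StarSubalgebra ℂ A} {Ω : A →ₗ[ℂ] ℂ} (hΩ : IsSepStateF A₁ A₂ Ω)
    {a b : A} (ha : a ∈ A₁) (hb : b ∈ A₂)
    (hanti : star a * star b = -(star b * star a)) : Ω (a * b) = 0 := by
  obtain ⟨_, _, Ω₁, Ω₂, -, -, hΩ₁, hΩ₂, hprod, hsum⟩ := hΩ
  rw [hsum a ha b hb]
  refine Finset.sum_eq_zero fun k _ => ?_
  obtain ⟨ω, hω, hωprod⟩ := hprod k
  rw [mul_assoc, mul_eq_zero_of_star_anticommute_s7 hω.map_star (hΩ₁ k).map_star (hΩ₂ k).map_star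
    (hωprod a ha b hb) (hωprod _ (star_mem ha) _ (star_mem hb)) hanti, mul_zero]

end

theorem entanglement_criterion_odd_odd_general
    {A : Type*} [NormedRing A] [StarRing A]
    [NormedAlgebra ℂ A] [StarModule ℂ A]
    -- the grading automorphism:
    (θ : A ≃⋆ₐ[ℂ] A)
    (A₁ A₂ : StarSubalgebra ℂ A)
    -- `(A₁, A₂)` is a graded bipartition:
    (h_anti : ∀ x ∈ A₁, θ x = -x → ∀ y ∈ A₂, θ y = -y → x * y = -(y * x))
    -- the state:
    (Ω : A →ₗ[ℂ] ℂ) :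
    ((∃ α₁ ∈ A₁, ∃ α₂ ∈ A₂, θ α₁ = -α₁ ∧ θ α₂ = -α₂ ∧ Ω (α₁ * α₂) ≠ 0) →
        ¬ IsSepStateF A₁ A₂ Ω) ∧
    (IsSepStateF A₁ A₂ Ω →
      ∀ α₁ ∈ A₁, ∀ α₂ ∈ A₂, θ α₁ = -α₁ → θ α₂ = -α₂ → Ω (α₁ * α₂) = 0) := by
  have star_odd {a : A} (ha : θ a = -a) : θ (star a) = -star a := by rw [map_star, ha, star_neg]
  have sep_vanishes : IsSepStateF A₁ A₂ Ω →
      ∀ α₁ ∈ A₁, ∀ α₂ ∈ A₂, θ α₁ = -α₁ → θ α₂ = -α₂ → Ω (α₁ * α₂) = 0 :=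
    fun hsep α₁ h₁ α₂ h₂ hodd₁ hodd₂ => hsep.map_mul_eq_zero_of_star_anticommute h₁ h₂
      (h_anti _ (star_mem h₁) (star_odd hodd₁) _ (star_mem h₂) (star_odd hodd₂))
  refine ⟨?_, sep_vanishes⟩
  rintro ⟨α₁, h₁, α₂, h₂, hodd₁, hodd₂, hne⟩ hsep
  exact hne (sep_vanishes hsep α₁ h₁ α₂ h₂ hodd₁ hodd₂)

/-- **Corollary 3 (entanglement criterion)**: for a graded bipartition
`(A₁, A₂)`, a state which is nonvanishing on a product of two odd local elements
is not `(A₁,A₂)`-separable; equivalently, every separable state vanishes on all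
such products. -/
theorem entanglement_criterion_odd_odd
    {A : Type*} [NormedRing A] [StarRing A] [CStarRing A]
    [NormedAlgebra ℂ A] [StarModule ℂ A] [CompleteSpace A]
    -- the grading automorphism:
    (θ : A ≃⋆ₐ[ℂ] A) (hθ : ∀ a : A, θ (θ a) = a)
    (A₁ A₂ : StarSubalgebra ℂ A)
    -- `(A₁, A₂)` is a graded bipartition:
    (h_inv₁ : ∀ x ∈ A₁, θ x ∈ A₁) (h_inv₂ : ∀ x ∈ A₂, θ x ∈ A₂)
    (h_inter : ∀ x : A, x ∈ A₁ → x ∈ A₂ → ∃ c : ℂ, x = algebraMap ℂ A c)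
    (h_gen : ∀ a : A, a ∈ Submodule.span ℂ {x : A | ∃ y ∈ A₁, ∃ z ∈ A₂, x = y * z})
    (h_comm₁ : ∀ x ∈ A₁, θ x = x → ∀ y ∈ A₂, x * y = y * x)
    (h_comm₂ : ∀ y ∈ A₂, θ y = y → ∀ x ∈ A₁, x * y = y * x)
    (h_anti : ∀ x ∈ A₁, θ x = -x → ∀ y ∈ A₂, θ y = -y → x * y = -(y * x))
    -- the state:
    (Ω : A →ₗ[ℂ] ℂ) (hΩ : IsState Ω) :
    ((∃ α₁ ∈ A₁, ∃ α₂ ∈ A₂, θ α₁ = -α₁ ∧ θ α₂ = -α₂ ∧ Ω (α₁ * α₂) ≠ 0) →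
        ¬ IsSepStateF A₁ A₂ Ω) ∧
    (IsSepStateF A₁ A₂ Ω →
      ∀ α₁ ∈ A₁, ∀ α₂ ∈ A₂, θ α₁ = -α₁ → θ α₂ = -α₂ → Ω (α₁ * α₂) = 0) :=
  entanglement_criterion_odd_odd_general θ A₁ A₂ h_anti Ω
end

section
/- Fix n ≥ 1 and 0 < p < 2n. Let τ(x) = 2^{−n}Tr(x) be the normalized trace on M_{2ⁿ}(ℂ), let B₁ be the unital ℂ-subalgebra of M_{2ⁿ}(ℂ) generated by m_1,…,m_p and B₂ the unital ℂ-subalgebra generated by m_{p+1},…,m_{2n}. Then τ(αβ) = τ(α)τ(β) for all α ∈ B₁ and β ∈ B₂ (the tracial state of the Clifford algebra is a product state, hence separable, for every mode bipartition). -/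
open Matrix

/-- The Pauli matrix `σ₁`. -/
def pauli1 : Matrix (Fin 2) (Fin 2) ℂ := !![0, 1; 1, 0]

/-- The Pauli matrix `σ₂`. -/
noncomputable def pauli2 : Matrix (Fin 2) (Fin 2) ℂ := !![0, -Complex.I; Complex.I, 0]

/-- The Pauli matrix `σ₃`. -/
def pauli3 : Matrix (Fin 2) (Fin 2) ℂ := !![1, 0; 0, -1]

/-- The `2n` Majorana matrices in `M_{2ⁿ}(ℂ) = M₂(ℂ)^{⊗n}` (identified with
matrices indexed by `Fin n → Fin 2`), given via the entrywise Kronecker-product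
formula: `m_{2j−1} = σ₀^{⊗(n−j)} ⊗ σ₁ ⊗ σ₃^{⊗(j−1)}` and
`m_{2j} = σ₀^{⊗(n−j)} ⊗ σ₂ ⊗ σ₃^{⊗(j−1)}` (0-indexed below). -/
noncomputable def majorana (n : ℕ) (j : Fin (2 * n)) :
    Matrix (Fin n → Fin 2) (Fin n → Fin 2) ℂ := fun x y =>
  ∏ i : Fin n,
    (if (i : ℕ) < (j : ℕ) / 2 then pauli3
     else if (i : ℕ) = (j : ℕ) / 2 then (if (j : ℕ) % 2 = 0 then pauli1 else pauli2)
     else (1 : Matrix (Fin 2) (Fin 2) ℂ)) (x i) (y i)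

/-!
Majorana matrices are Pauli strings: tensor products `σ_a = ⊗ᵢ σ_{aᵢ}` indexed by symbols
`a ∈ ((ℤ/2)²)ⁿ`. Pauli strings multiply by adding symbols up to a phase and are orthonormal for
the normalized trace, `τ(σ_a σ_b) = δ_{ab}`. Hence `B₁` and `B₂` are spanned by Pauli strings whose
symbols lie in the `ℤ/2`-spans `V₁`, `V₂` of the symbols of `m_1, …, m_p` and of
`m_{p+1}, …, m_{2n}`. The `2n` Majorana symbols are linearly independent, so `V₁ ∩ V₂ = 0`, and for
`a ∈ V₁`, `b ∈ V₂` we get `τ(σ_a σ_b) = δ_{ab} = δ_{a0} δ_{b0} = τ(σ_a) τ(σ_b)`; bilinearity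
does the rest.
-/

open Matrix

theorem LinearMap.map_mul_of_mem_span {R A : Type*} [CommRing R] [Ring A] [Algebra R A]
    (τ : A →ₗ[R] R) {s t : Set A} (h : ∀ x ∈ s, ∀ y ∈ t, τ (x * y) = τ x * τ y) {x y : A}
    (hx : x ∈ Submodule.span R s) (hy : y ∈ Submodule.span R t) : τ (x * y) = τ x * τ y := by
  let f : A →ₗ[R] A →ₗ[R] R := (LinearMap.mul R A).compr₂ τ - (LinearMap.mul R R).compl₁₂ τ τ
  have hf : f x y ∈ Submodule.map₂ f (Submodule.span R s) (Submodule.span R t) :=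
    Submodule.apply_mem_map₂ f hx hy
  rw [Submodule.map₂_span_span, Submodule.span_eq_bot.2] at hf
  · simpa [f, sub_eq_zero] using hf
  · rintro _ ⟨x, hx, y, hy, rfl⟩
    simp [f, h x hx y hy]

namespace Matrix

variable {ι m R : Type*} [Fintype ι] [CommSemiring R]

def kroneckerPi (A : ι → Matrix m m R) : Matrix (ι → m) (ι → m) R :=
  of fun x y => ∏ i, A i (x i) (y i)

theorem kroneckerPi_mul [DecidableEq ι] [Fintype m] (A B : ι → Matrix m m R) :
    kroneckerPi A * kroneckerPi B = kroneckerPi (A * B) := by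
  ext x y
  simp only [kroneckerPi, mul_apply, of_apply, Pi.mul_apply, ← Finset.prod_mul_distrib]
  exact (Fintype.prod_sum fun i k => A i (x i) k * B i k (y i)).symm

theorem kroneckerPi_smul (c : ι → R) (A : ι → Matrix m m R) :
    kroneckerPi (c • A) = (∏ i, c i) • kroneckerPi A := by
  ext x y
  simp [kroneckerPi, Finset.prod_mul_distrib]

theorem trace_kroneckerPi [DecidableEq ι] [Fintype m] (A : ι → Matrix m m R) :
    (kroneckerPi A).trace = ∏ i, (A i).trace := by
  simp only [trace, diag, kroneckerPi, of_apply]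
  exact (Fintype.prod_sum fun i k => A i k k).symm

theorem kroneckerPi_one [DecidableEq ι] [DecidableEq m] :
    kroneckerPi (1 : ι → Matrix m m R) = 1 := by
  ext x y
  simp [kroneckerPi, one_apply, Finset.prod_boole, funext_iff]

end Matrix

-- `pauli (x, z)` is `σ₁ˣ σ₃ᶻ` up to a phase.
noncomputable def pauli (a : ZMod 2 × ZMod 2) : Matrix (Fin 2) (Fin 2) ℂ :=
  if a.1 = 0 then (if a.2 = 0 then 1 else pauli3) else (if a.2 = 0 then pauli1 else pauli2)

theorem forall_zmod_two_prod {P : ZMod 2 × ZMod 2 → Prop} (h00 : P (0, 0)) (h01 : P (0, 1))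
    (h10 : P (1, 0)) (h11 : P (1, 1)) : ∀ a, P a := by
  rintro ⟨x, z⟩
  fin_cases x <;> fin_cases z <;> assumption

theorem pauli_mul_self (a : ZMod 2 × ZMod 2) : pauli a * pauli a = 1 := by
  revert a
  refine forall_zmod_two_prod ?_ ?_ ?_ ?_ <;>
  · ext i j
    fin_cases i <;> fin_cases j <;> simp [pauli, pauli1, pauli2, pauli3, Matrix.mul_apply]

theorem pauli_mul (a b : ZMod 2 × ZMod 2) : ∃ c : ℂ, pauli a * pauli b = c • pauli (a + b) := by
  -- `pauli (a + b)` squares to `1`, so the phase must be `½ tr(σ_a σ_b σ_{a+b})`.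
  refine ⟨(pauli a * pauli b * pauli (a + b)).trace / 2, ?_⟩
  revert a b
  refine forall_zmod_two_prod ?_ ?_ ?_ ?_ <;> refine forall_zmod_two_prod ?_ ?_ ?_ ?_ <;>
  · ext i j
    fin_cases i <;> fin_cases j <;>
      simp [pauli, pauli1, pauli2, pauli3, Matrix.mul_apply, Matrix.trace_fin_two, Prod.mk_add_mk,
        CharTwo.add_self_eq_zero]

theorem trace_pauli (a : ZMod 2 × ZMod 2) : (pauli a).trace = if a = 0 then 2 else 0 := by
  revert a
  refine forall_zmod_two_prod ?_ ?_ ?_ ?_ <;>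
    simp [pauli, pauli1, pauli2, pauli3, Matrix.trace_fin_two]

section PauliString

variable {ι : Type*} [Fintype ι] [DecidableEq ι]

noncomputable def pauliString (a : ι → ZMod 2 × ZMod 2) : Matrix (ι → Fin 2) (ι → Fin 2) ℂ :=
  kroneckerPi fun i => pauli (a i)

theorem pauliString_zero : pauliString (0 : ι → ZMod 2 × ZMod 2) = 1 :=
  kroneckerPi_one

theorem pauliString_mul_self (a : ι → ZMod 2 × ZMod 2) : pauliString a * pauliString a = 1 := by
  have h : (fun i => pauli (a i)) * (fun i => pauli (a i)) = 1 :=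
    funext fun i => pauli_mul_self (a i)
  rw [pauliString, kroneckerPi_mul, h, kroneckerPi_one]

theorem pauliString_mul (a b : ι → ZMod 2 × ZMod 2) :
    ∃ c : ℂ, pauliString a * pauliString b = c • pauliString (a + b) := by
  choose c hc using fun i => pauli_mul (a i) (b i)
  refine ⟨∏ i, c i, ?_⟩
  simp only [pauliString, kroneckerPi_mul, ← kroneckerPi_smul]
  congr with i : 1
  exact hc i

theorem trace_pauliString (a : ι → ZMod 2 × ZMod 2) :
    (pauliString a).trace = if a = 0 then 2 ^ Fintype.card ι else 0 := by
  simp [pauliString, trace_kroneckerPi, trace_pauli, Fintype.prod_ite_zero, funext_iff]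

theorem span_pauliString_mul_le {A : Set (ι → ZMod 2 × ZMod 2)}
    (hA : ∀ a ∈ A, ∀ b ∈ A, a + b ∈ A) :
    Submodule.span ℂ (pauliString '' A) * Submodule.span ℂ (pauliString '' A) ≤
      Submodule.span ℂ (pauliString '' A) := by
  rw [Submodule.span_mul_span, Submodule.span_le]
  rintro _ ⟨_, ⟨a, ha, rfl⟩, _, ⟨b, hb, rfl⟩, rfl⟩
  obtain ⟨c, hc⟩ := pauliString_mul a b
  change pauliString a * pauliString b ∈ _
  rw [hc]
  exact Submodule.smul_mem _ c (Submodule.subset_span ⟨a + b, hA a ha b hb, rfl⟩)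

noncomputable def pauliSpan (A : Submodule (ZMod 2) (ι → ZMod 2 × ZMod 2)) :
    Subalgebra ℂ (Matrix (ι → Fin 2) (ι → Fin 2) ℂ) :=
  (Submodule.span ℂ (pauliString '' (A : Set (ι → ZMod 2 × ZMod 2)))).toSubalgebra
    (Submodule.subset_span ⟨0, A.zero_mem, pauliString_zero⟩)
    fun _ _ hx hy =>
      span_pauliString_mul_le (fun _ ha _ hb => A.add_mem ha hb) (Submodule.mul_mem_mul hx hy)

variable (ι) in
noncomputable def normalizedTrace : Matrix (ι → Fin 2) (ι → Fin 2) ℂ →ₗ[ℂ] ℂ :=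
  (2 ^ Fintype.card ι : ℂ)⁻¹ • traceLinearMap (ι → Fin 2) ℂ ℂ

theorem normalizedTrace_apply (x : Matrix (ι → Fin 2) (ι → Fin 2) ℂ) :
    normalizedTrace ι x = (2 ^ Fintype.card ι : ℂ)⁻¹ * x.trace :=
  rfl

theorem normalizedTrace_pauliString (a : ι → ZMod 2 × ZMod 2) :
    normalizedTrace ι (pauliString a) = if a = 0 then 1 else 0 := by
  rw [normalizedTrace_apply, trace_pauliString]
  split_ifs <;> simp

theorem normalizedTrace_pauliString_mul (a b : ι → ZMod 2 × ZMod 2) :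
    normalizedTrace ι (pauliString a * pauliString b) = if a = b then 1 else 0 := by
  by_cases hab : a = b
  · subst hab
    rw [pauliString_mul_self, ← pauliString_zero, normalizedTrace_pauliString]
    simp
  · obtain ⟨c, hc⟩ := pauliString_mul a b
    have hab' : a + b ≠ 0 := fun h => hab (by rwa [← ZModModule.sub_eq_add, sub_eq_zero] at h)
    rw [hc, map_smul, normalizedTrace_pauliString]
    simp [hab, hab']

theorem normalizedTrace_mul_of_disjoint {A B : Submodule (ZMod 2) (ι → ZMod 2 × ZMod 2)}
    (hAB : Disjoint A B) {x y : Matrix (ι → Fin 2) (ι → Fin 2) ℂ} (hx : x ∈ pauliSpan A)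
    (hy : y ∈ pauliSpan B) :
    normalizedTrace ι (x * y) = normalizedTrace ι x * normalizedTrace ι y := by
  refine LinearMap.map_mul_of_mem_span _ ?_ hx hy
  rintro _ ⟨a, ha, rfl⟩ _ ⟨b, hb, rfl⟩
  rw [normalizedTrace_pauliString_mul, normalizedTrace_pauliString, normalizedTrace_pauliString]
  by_cases hab : a = b
  · subst hab
    obtain rfl : a = 0 := Submodule.disjoint_def.1 hAB a ha hb
    simp
  · rw [if_neg hab]
    split_ifs <;> simp_all

end PauliString

def majoranaSymbol (n : ℕ) (j : Fin (2 * n)) : Fin n → ZMod 2 × ZMod 2 := fun i =>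
  (if (i : ℕ) = j / 2 then 1 else 0, if 2 * (i : ℕ) < j then 1 else 0)

theorem majorana_eq_pauliString (n : ℕ) (j : Fin (2 * n)) :
    majorana n j = pauliString (majoranaSymbol n j) := by
  have site : ∀ i : Fin n, (if (i : ℕ) < j / 2 then pauli3
      else if (i : ℕ) = j / 2 then (if (j : ℕ) % 2 = 0 then pauli1 else pauli2) else 1) =
        pauli (majoranaSymbol n j i) := by
    intro i
    simp only [pauli, majoranaSymbol]
    split_ifs <;> first | rfl | omega | simp_all
  ext x y
  simp only [majorana, site]
  rfl

-- Interleaved coordinates `2i ↦ xᵢ`, `2i + 1 ↦ zᵢ`, in which the Majorana symbols form an upper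
-- unitriangular matrix.
def symbolCoord (n : ℕ) : (Fin n → ZMod 2 × ZMod 2) →ₗ[ZMod 2] Fin (2 * n) → ZMod 2 :=
  LinearMap.pi fun k =>
    (if (k : ℕ) % 2 = 0 then LinearMap.fst _ _ _ else LinearMap.snd _ _ _) ∘ₗ
      LinearMap.proj ⟨k / 2, by omega⟩

theorem symbolCoord_majoranaSymbol_of_lt {n : ℕ} {j k : Fin (2 * n)} (h : j < k) :
    symbolCoord n (majoranaSymbol n j) k = 0 := by
  simp only [symbolCoord, LinearMap.pi_apply, LinearMap.comp_apply, LinearMap.proj_apply,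
    majoranaSymbol]
  split_ifs <;> first | rfl | omega

theorem symbolCoord_majoranaSymbol_self {n : ℕ} (k : Fin (2 * n)) :
    symbolCoord n (majoranaSymbol n k) k = 1 := by
  simp only [symbolCoord, LinearMap.pi_apply, LinearMap.comp_apply, LinearMap.proj_apply,
    majoranaSymbol]
  split_ifs <;> first | rfl | omega

theorem linearIndependent_majoranaSymbol (n : ℕ) :
    LinearIndependent (ZMod 2) (majoranaSymbol n) := by
  let M : Matrix (Fin (2 * n)) (Fin (2 * n)) (ZMod 2) :=
    of fun k j => symbolCoord n (majoranaSymbol n j) k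
  have hM : M.IsUpperTriangular := fun _ _ h => symbolCoord_majoranaSymbol_of_lt h
  have hdet : M.det = 1 := by
    simp [det_of_isUpperTriangular hM, M, symbolCoord_majoranaSymbol_self]
  exact .of_comp (symbolCoord n) (linearIndependent_cols_of_det_ne_zero (A := M) (by simp [hdet]))

theorem adjoin_majorana_le_pauliSpan (n : ℕ) (P : Fin (2 * n) → Prop) :
    Algebra.adjoin ℂ {x | ∃ j, P j ∧ x = majorana n j} ≤
      pauliSpan (Submodule.span (ZMod 2) (majoranaSymbol n '' {j | P j})) := by
  refine Algebra.adjoin_le ?_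
  rintro _ ⟨j, hj, rfl⟩
  rw [majorana_eq_pauliString]
  exact Submodule.subset_span ⟨_, Submodule.subset_span ⟨j, hj, rfl⟩, rfl⟩

theorem trace_state_product_general (n p : ℕ)
    (α β : Matrix (Fin n → Fin 2) (Fin n → Fin 2) ℂ)
    (hα : α ∈ Algebra.adjoin ℂ {x | ∃ j : Fin (2 * n), (j : ℕ) < p ∧ x = majorana n j})
    (hβ : β ∈ Algebra.adjoin ℂ {x | ∃ j : Fin (2 * n), p ≤ (j : ℕ) ∧ x = majorana n j}) :
    ((2 : ℂ) ^ n)⁻¹ * (α * β).trace =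
      (((2 : ℂ) ^ n)⁻¹ * α.trace) * (((2 : ℂ) ^ n)⁻¹ * β.trace) := by
  have hdisj := (linearIndependent_majoranaSymbol n).disjoint_span_image
    (s := {j | (j : ℕ) < p}) (t := {j | p ≤ (j : ℕ)})
    (Set.disjoint_left.2 fun _ (h₁ : _ < p) h₂ => Nat.not_le_of_lt h₁ h₂)
  simpa [normalizedTrace_apply] using normalizedTrace_mul_of_disjoint hdisj
    (adjoin_majorana_le_pauliSpan n _ hα) (adjoin_majorana_le_pauliSpan n _ hβ)

/-- **The tracial state of the Clifford algebra is a product state for every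
mode bipartition**: with `τ(x) = 2^{−n}Tr(x)`, `B₁` the unital subalgebra
generated by `m₁,…,m_p` and `B₂` the one generated by `m_{p+1},…,m_{2n}`, one
has `τ(αβ) = τ(α)τ(β)` for `α ∈ B₁`, `β ∈ B₂`. -/
theorem trace_state_product (n p : ℕ) (hn : 1 ≤ n) (hp0 : 0 < p) (hp : p < 2 * n)
    (α β : Matrix (Fin n → Fin 2) (Fin n → Fin 2) ℂ)
    (hα : α ∈ Algebra.adjoin ℂ {x | ∃ j : Fin (2 * n), (j : ℕ) < p ∧ x = majorana n j})
    (hβ : β ∈ Algebra.adjoin ℂ {x | ∃ j : Fin (2 * n), p ≤ (j : ℕ) ∧ x = majorana n j}) :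
    ((2 : ℂ) ^ n)⁻¹ * (α * β).trace =
      (((2 : ℂ) ^ n)⁻¹ * α.trace) * (((2 : ℂ) ^ n)⁻¹ * β.trace) :=
  trace_state_product_general n p α β hα hβ
end

section
/- Let e₁, e₂ be the standard orthonormal basis of ℂ² and let ψ = a₁e₁ + a₂e₂ be a unit vector. Then ⟨ψ, αβψ⟩ = ⟨ψ, αψ⟩⟨ψ, βψ⟩ holds for all α ∈ span_ℂ{1, σ₃} and β ∈ span_ℂ{1, σ₁} if and only if Im(conj(a₁)·a₂) = 0 and (|a₁| = |a₂| or Re(conj(a₁)·a₂) = 0); equivalently, if and only if ψ is a unimodular scalar multiple of one of the four vectors e₁, e₂, (e₁ + e₂)/√2, (e₁ − e₂)/√2. -/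
/-!
The expectation `ω(M) = ⟨ψ, M ψ⟩` is a linear functional with `ω(1) = 1`, so multiplicativity
on `span{1, σ₃} × span{1, σ₁}` reduces to the single identity `ω(σ₃σ₁) = ω(σ₃) ω(σ₁)`.
With `z = conj a₁ · a₂` this reads `2i Im z = 2 (|a₁|² - |a₂|²) Re z`, whose imaginary and real
parts give the first characterization. It holds exactly when `a₁ = 0`, `a₂ = 0` or `a₂ = ±a₁`,
and normalization turns these into the four listed vectors.
-/

open Matrix

/-- The standard inner product on `ℂ²`. -/
noncomputable def ip2 (v w : Fin 2 → ℂ) : ℂ :=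
  ∑ i : Fin 2, (starRingEnd ℂ) (v i) * w i

open ComplexConjugate

theorem forall_mem_span_pair_one_map_mul_iff {R A : Type*} [CommRing R] [Ring A] [Algebra R A]
    (f : A →ₗ[R] R) (hf : f 1 = 1) (a b : A) :
    (∀ x ∈ Submodule.span R ({1, a} : Set A), ∀ y ∈ Submodule.span R ({1, b} : Set A),
      f (x * y) = f x * f y) ↔ f (a * b) = f a * f b := by
  refine ⟨fun h ↦ h a (Submodule.subset_span (by simp)) b (Submodule.subset_span (by simp)), ?_⟩
  rintro hab x hx y hy
  obtain ⟨s, t, rfl⟩ := Submodule.mem_span_pair.mp hx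
  obtain ⟨u, v, rfl⟩ := Submodule.mem_span_pair.mp hy
  simp only [add_mul, mul_add, smul_mul_smul_comm, one_mul, mul_one, map_add, map_smul,
    smul_eq_mul, hf]
  linear_combination (t * v) * hab

noncomputable def vectorState (ψ : Fin 2 → ℂ) : Matrix (Fin 2) (Fin 2) ℂ →ₗ[ℂ] ℂ where
  toFun M := ip2 ψ (M *ᵥ ψ)
  map_add' M N := by simp only [ip2, add_mulVec, Pi.add_apply, mul_add, Finset.sum_add_distrib]
  map_smul' c M := by
    simp only [ip2, smul_mulVec, Pi.smul_apply, smul_eq_mul, Finset.mul_sum, RingHom.id_apply]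
    exact Finset.sum_congr rfl fun i _ ↦ by ring

section

variable (ψ : Fin 2 → ℂ)

theorem vectorState_apply (M : Matrix (Fin 2) (Fin 2) ℂ) : vectorState ψ M = ip2 ψ (M *ᵥ ψ) :=
  rfl

theorem ip2_self : ip2 ψ ψ = ((‖ψ 0‖ ^ 2 + ‖ψ 1‖ ^ 2 : ℝ) : ℂ) := by
  simp [ip2, Fin.sum_univ_two, Complex.conj_mul']

theorem vectorState_one : vectorState ψ 1 = ip2 ψ ψ := by
  rw [vectorState_apply, one_mulVec]

theorem vectorState_of (p q r s : ℂ) :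
    vectorState ψ !![p, q; r, s] =
      conj (ψ 0) * (p * ψ 0 + q * ψ 1) + conj (ψ 1) * (r * ψ 0 + s * ψ 1) := by
  simp [vectorState_apply, ip2, mulVec, dotProduct, Fin.sum_univ_two]

theorem vectorState_pauli3 :
    vectorState ψ pauli3 = ((‖ψ 0‖ ^ 2 - ‖ψ 1‖ ^ 2 : ℝ) : ℂ) := by
  rw [pauli3, vectorState_of]
  push_cast
  rw [← Complex.conj_mul', ← Complex.conj_mul']
  ring

theorem vectorState_pauli1 :
    vectorState ψ pauli1 = conj (ψ 0) * ψ 1 + conj (conj (ψ 0) * ψ 1) := by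
  rw [pauli1, vectorState_of, map_mul, Complex.conj_conj]
  ring

theorem vectorState_pauli3_mul_pauli1 :
    vectorState ψ (pauli3 * pauli1) = conj (ψ 0) * ψ 1 - conj (conj (ψ 0) * ψ 1) := by
  rw [pauli3, pauli1, mul_fin_two, vectorState_of, map_mul, Complex.conj_conj]
  ring

end

theorem Complex.sub_conj_eq_ofReal_mul_add_conj_iff (z : ℂ) (d : ℝ) :
    z - conj z = d * (z + conj z) ↔ z.im = 0 ∧ (d = 0 ∨ z.re = 0) := by
  rw [Complex.sub_conj, Complex.add_conj, Complex.ext_iff]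
  simpa using and_comm

theorem vectorState_pauli3_mul_pauli1_eq_mul_iff (ψ : Fin 2 → ℂ) :
    vectorState ψ (pauli3 * pauli1) = vectorState ψ pauli3 * vectorState ψ pauli1 ↔
      (conj (ψ 0) * ψ 1).im = 0 ∧ (‖ψ 0‖ = ‖ψ 1‖ ∨ (conj (ψ 0) * ψ 1).re = 0) := by
  rw [vectorState_pauli3_mul_pauli1, vectorState_pauli3, vectorState_pauli1,
    Complex.sub_conj_eq_ofReal_mul_add_conj_iff, sub_eq_zero,
    sq_eq_sq₀ (norm_nonneg _) (norm_nonneg _)]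

theorem Complex.eq_or_eq_neg_of_norm_eq_of_im_conj_mul_eq_zero {a b : ℂ} (hn : ‖a‖ = ‖b‖)
    (him : (conj a * b).im = 0) : b = a ∨ b = -a := by
  rcases eq_or_ne a 0 with rfl | ha
  · exact Or.inl (by simpa [eq_comm] using hn)
  have hreal : conj a * b = ((conj a * b).re : ℂ) := Complex.ext rfl (by simp [him])
  have habs : |(conj a * b).re| = ‖a‖ ^ 2 := by
    rw [Complex.abs_re_eq_norm.mpr him, norm_mul, Complex.norm_conj, ← hn, sq]
  have hconj : conj a ≠ 0 := (map_ne_zero _).mpr ha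
  rcases (abs_eq (sq_nonneg _)).mp habs with h | h
  · left
    refine mul_left_cancel₀ hconj ?_
    rw [hreal, h, Complex.conj_mul', Complex.ofReal_pow]
  · right
    refine mul_left_cancel₀ hconj ?_
    rw [hreal, h, mul_neg, Complex.conj_mul', Complex.ofReal_neg, Complex.ofReal_pow]

theorem Complex.im_conj_mul_eq_zero_and_iff (a b : ℂ) :
    (conj a * b).im = 0 ∧ (‖a‖ = ‖b‖ ∨ (conj a * b).re = 0) ↔
      a = 0 ∨ b = 0 ∨ b = a ∨ b = -a := by
  constructor
  · rintro ⟨him, hn | hre⟩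
    · exact Or.inr (Or.inr (eq_or_eq_neg_of_norm_eq_of_im_conj_mul_eq_zero hn him))
    · have hz : conj a * b = 0 := Complex.ext hre him
      exact (by simpa using hz : a = 0 ∨ b = 0).imp_right Or.inl
  · rintro (rfl | rfl | rfl | rfl) <;> simp [Complex.conj_mul', ← Complex.ofReal_pow]

theorem norm_mul_sqrt_two_eq_one {a : ℂ} (ha : 2 * ‖a‖ ^ 2 = 1) : ‖a * (√2 : ℂ)‖ = 1 := by
  have hsq : ‖a * (√2 : ℂ)‖ ^ 2 = 1 := by
    rw [norm_mul, mul_pow, Complex.norm_real, Real.norm_eq_abs, sq_abs,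
      Real.sq_sqrt zero_le_two, mul_comm, ha]
  exact (pow_eq_one_iff_of_nonneg (norm_nonneg _) two_ne_zero).mp hsq

theorem eq_smul_vec2_iff (ψ : Fin 2 → ℂ) (c x y : ℂ) :
    ψ = c • ![x, y] ↔ ψ 0 = c * x ∧ ψ 1 = c * y := by
  simp [funext_iff, Fin.forall_fin_two]

theorem exists_norm_eq_one_smul_iff (ψ : Fin 2 → ℂ) (hψ : ‖ψ 0‖ ^ 2 + ‖ψ 1‖ ^ 2 = 1) :
    (ψ 0 = 0 ∨ ψ 1 = 0 ∨ ψ 1 = ψ 0 ∨ ψ 1 = -ψ 0) ↔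
      ∃ c : ℂ, ‖c‖ = 1 ∧
        (ψ = c • ![1, 0] ∨ ψ = c • ![0, 1] ∨
          ψ = c • ((Real.sqrt 2 : ℂ)⁻¹ • ![1, 1]) ∨
          ψ = c • ((Real.sqrt 2 : ℂ)⁻¹ • ![1, -1])) := by
  simp only [smul_smul, eq_smul_vec2_iff, mul_one, mul_zero, mul_neg]
  have hs : (√2 : ℂ) ≠ 0 := by exact_mod_cast (Real.sqrt_pos.mpr two_pos).ne'
  constructor
  · rintro (h | h | h | h)
    · refine ⟨ψ 1, ?_, Or.inr (Or.inl ⟨h, rfl⟩)⟩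
      simpa [h, pow_eq_one_iff_of_nonneg (norm_nonneg _)] using hψ
    · refine ⟨ψ 0, ?_, Or.inl ⟨rfl, h⟩⟩
      simpa [h, pow_eq_one_iff_of_nonneg (norm_nonneg _)] using hψ
    · refine ⟨ψ 0 * √2, norm_mul_sqrt_two_eq_one (by rw [h] at hψ; linarith), ?_⟩
      simp only [mul_inv_cancel_right₀ hs, h, true_and, or_true, true_or]
    · refine ⟨ψ 0 * √2, norm_mul_sqrt_two_eq_one (by rw [h, norm_neg] at hψ; linarith), ?_⟩
      simp only [mul_inv_cancel_right₀ hs, h, true_and, or_true]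
  · rintro ⟨c, -, ⟨-, h1⟩ | ⟨h0, -⟩ | ⟨h0, h1⟩ | ⟨h0, h1⟩⟩
    · exact Or.inr (Or.inl h1)
    · exact Or.inl h0
    · exact Or.inr (Or.inr (Or.inl (h1.trans h0.symm)))
    · exact Or.inr (Or.inr (Or.inr (by rw [h0, h1])))

/-- **Characterization of separable pure vector states of `C₂ ≅ M₂(ℂ)`** for the
bipartition `(span{1,σ₃}, span{1,σ₁})`: a unit vector `ψ = a₁e₁ + a₂e₂` is
separable iff `Im(conj a₁ · a₂) = 0` and (`|a₁| = |a₂|` or `Re(conj a₁ · a₂) = 0`);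
equivalently, iff `ψ` is a unimodular multiple of `e₁`, `e₂`, `(e₁+e₂)/√2` or
`(e₁−e₂)/√2`. -/
theorem separable_vectors_C2 (ψ : Fin 2 → ℂ) (hψ : ip2 ψ ψ = 1) :
    ((∀ α ∈ Submodule.span ℂ ({1, pauli3} : Set (Matrix (Fin 2) (Fin 2) ℂ)),
      ∀ β ∈ Submodule.span ℂ ({1, pauli1} : Set (Matrix (Fin 2) (Fin 2) ℂ)),
        ip2 ψ ((α * β).mulVec ψ) = ip2 ψ (α.mulVec ψ) * ip2 ψ (β.mulVec ψ)) ↔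
      (((starRingEnd ℂ) (ψ 0) * ψ 1).im = 0 ∧
        (‖ψ 0‖ = ‖ψ 1‖ ∨
          ((starRingEnd ℂ) (ψ 0) * ψ 1).re = 0))) ∧
    ((∀ α ∈ Submodule.span ℂ ({1, pauli3} : Set (Matrix (Fin 2) (Fin 2) ℂ)),
      ∀ β ∈ Submodule.span ℂ ({1, pauli1} : Set (Matrix (Fin 2) (Fin 2) ℂ)),
        ip2 ψ ((α * β).mulVec ψ) = ip2 ψ (α.mulVec ψ) * ip2 ψ (β.mulVec ψ)) ↔
      ∃ c : ℂ, ‖c‖ = 1 ∧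
        (ψ = c • ![1, 0] ∨ ψ = c • ![0, 1] ∨
          ψ = c • ((Real.sqrt 2 : ℂ)⁻¹ • ![1, 1]) ∨
          ψ = c • ((Real.sqrt 2 : ℂ)⁻¹ • ![1, -1]))) := by
  have hsep := (forall_mem_span_pair_one_map_mul_iff (vectorState ψ)
    ((vectorState_one ψ).trans hψ) pauli3 pauli1).trans (vectorState_pauli3_mul_pauli1_eq_mul_iff ψ)
  have hnorm : ‖ψ 0‖ ^ 2 + ‖ψ 1‖ ^ 2 = 1 := by exact_mod_cast (ip2_self ψ).symm.trans hψ
  exact ⟨hsep, hsep.trans ((Complex.im_conj_mul_eq_zero_and_iff _ _).trans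
    (exists_norm_eq_one_smul_iff ψ hnorm))⟩
end

section
/- Let ρ = Σ_{i,j∈{1,2}} λ_{ij} |e_i⟩⟨e_j| be a density matrix on ℂ², written in the standard basis e₁, e₂. If the off-diagonal coefficient λ₁₂ has nonzero imaginary part, then ρ is entangled with respect to the bipartition (span_ℂ{1, σ₃}, span_ℂ{1, σ₁}), i.e. ρ is not a finite convex combination of projectors onto separable unit vectors. -/
open Matrix
open scoped ComplexOrder

/-- A unit vector of `ℂ²` is separable (a product vector state) for the
bipartition `(span{1,σ₃}, span{1,σ₁})` of `C₂ ≅ M₂(ℂ)`. -/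
def IsSepVec (ψ : Fin 2 → ℂ) : Prop :=
  ip2 ψ ψ = 1 ∧
  ∀ α ∈ Submodule.span ℂ ({1, pauli3} : Set (Matrix (Fin 2) (Fin 2) ℂ)),
    ∀ β ∈ Submodule.span ℂ ({1, pauli1} : Set (Matrix (Fin 2) (Fin 2) ℂ)),
      ip2 ψ ((α * β).mulVec ψ) = ip2 ψ (α.mulVec ψ) * ip2 ψ (β.mulVec ψ)

/-- A density matrix on `ℂ²` is separable if it is a finite convex combination
of projectors `|ψ⟩⟨ψ|` onto separable unit vectors. -/
def IsSepDM (ρ : Matrix (Fin 2) (Fin 2) ℂ) : Prop :=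
  ∃ (n : ℕ) (μ : Fin n → ℝ) (ψ : Fin n → (Fin 2 → ℂ)),
    (∀ i, 0 ≤ μ i) ∧ (∑ i, μ i) = 1 ∧ (∀ i, IsSepVec (ψ i)) ∧
    ρ = ∑ i, (μ i : ℂ) • Matrix.vecMulVec (ψ i) (star (ψ i))

/-!
`σ₃σ₁ = [[0,1],[-1,0]]` is anti-Hermitian, so `⟨ψ, σ₃σ₁ψ⟩ = z - z̄` with `z = ψ̄₀ψ₁` is purely
imaginary, while `⟨ψ, σ₃ψ⟩⟨ψ, σ₁ψ⟩` is a product of expectations of Hermitian matrices, hence real.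
Separability of `ψ` equates the two, so `Im z = 0`: the off-diagonal entry `ψ₀ψ̄₁ = z̄` of
`|ψ⟩⟨ψ|` is real, and so is that of every convex combination of such projectors.
-/

lemma im_ip2_mulVec_self_of_isHermitian {A : Matrix (Fin 2) (Fin 2) ℂ} (hA : A.IsHermitian)
    (ψ : Fin 2 → ℂ) : (ip2 ψ (A *ᵥ ψ)).im = 0 :=
  hA.im_star_dotProduct_mulVec_self ψ

lemma pauli1_isHermitian : pauli1.IsHermitian := by
  ext i j; fin_cases i <;> fin_cases j <;> simp [pauli1]

lemma pauli3_isHermitian : pauli3.IsHermitian := by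
  ext i j; fin_cases i <;> fin_cases j <;> simp [pauli3]

lemma pauli3_mul_pauli1 : pauli3 * pauli1 = !![0, 1; -1, 0] := by
  ext i j; fin_cases i <;> fin_cases j <;> simp [pauli1, pauli3]

lemma ip2_pauli3_mul_pauli1_mulVec (ψ : Fin 2 → ℂ) :
    ip2 ψ ((pauli3 * pauli1) *ᵥ ψ) =
      (starRingEnd ℂ) (ψ 0) * ψ 1 - (starRingEnd ℂ) ((starRingEnd ℂ) (ψ 0) * ψ 1) := by
  rw [pauli3_mul_pauli1]
  simp [ip2, Fin.sum_univ_two, vecHead, vecTail, sub_eq_add_neg, mul_comm]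

lemma IsSepVec.im_vecMulVec_star_apply_zero_one {ψ : Fin 2 → ℂ} (hψ : IsSepVec ψ) :
    (vecMulVec ψ (star ψ) 0 1).im = 0 := by
  have hprod := congrArg Complex.im <|
    hψ.2 pauli3 (Submodule.subset_span (by simp)) pauli1 (Submodule.subset_span (by simp))
  rw [ip2_pauli3_mul_pauli1_mulVec, Complex.sub_im, Complex.conj_im, Complex.mul_im (ip2 ψ _),
    im_ip2_mulVec_self_of_isHermitian pauli3_isHermitian,
    im_ip2_mulVec_self_of_isHermitian pauli1_isHermitian] at hprod
  have hconj : vecMulVec ψ (star ψ) 0 1 = (starRingEnd ℂ) ((starRingEnd ℂ) (ψ 0) * ψ 1) := by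
    simp [vecMulVec_apply, mul_comm]
  rw [hconj, Complex.conj_im]
  linarith

lemma IsSepDM.im_apply_zero_one {ρ : Matrix (Fin 2) (Fin 2) ℂ} (hρ : IsSepDM ρ) :
    (ρ 0 1).im = 0 := by
  obtain ⟨n, μ, ψ, -, -, hψ, rfl⟩ := hρ
  simp [Matrix.sum_apply, Complex.im_sum, (hψ _).im_vecMulVec_star_apply_zero_one]

theorem complex_offdiagonal_entangled_general
    (ρ : Matrix (Fin 2) (Fin 2) ℂ)
    (him : (ρ 0 1).im ≠ 0) :
    ¬ IsSepDM ρ :=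
  fun hρ => him hρ.im_apply_zero_one

/-- **Lemma 5**: a density matrix on `ℂ²` whose off-diagonal coefficient has a
nonzero imaginary part is entangled with respect to the bipartition
`(span{1,σ₃}, span{1,σ₁})`. -/
theorem complex_offdiagonal_entangled
    (ρ : Matrix (Fin 2) (Fin 2) ℂ) (hpos : ρ.PosSemidef) (htr : ρ.trace = 1)
    (him : (ρ 0 1).im ≠ 0) :
    ¬ IsSepDM ρ :=
  complex_offdiagonal_entangled_general ρ him
end

section
/- For n ≥ 2 and real numbers ω₁,…,ω_n, let J = i Σ_{k=1}^{n} ω_k m_{2k−1} m_{2k} ∈ M_{2ⁿ}(ℂ), let γ = m₁ m_{n+1} and F = (1 + iγ)/√2. Then 2^{−n}Tr(F* J F) = 0 and 2^{−n}Tr(F* J² F) = Σ_{k=1}^{n} ω_k². Consequently the variance of the (self-adjoint) operator J in the unit vector state x ↦ 2^{−n}Tr(F* x F) equals Σ_{k=1}^{n} ω_k². -/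
open Matrix

/-!
The Majorana matrices are self-adjoint involutions that pairwise anticommute (checked site by site
on their Kronecker-product form), and the computation uses nothing else besides cyclicity of
`τ = 2⁻ⁿ Tr`.

With `u = iγ`, a self-adjoint involution, `F` is self-adjoint and `F² = 1 + u`, so the state is
`x ↦ τ(x) + τ(u x)`. The pair products `Pₖ = m_{2k-1} m_{2k}` commute with each other, so `J` and
`J²` commute with `P₁`, which anticommutes with `γ = m₁ m_{n+1}`; conjugating by the unit `P₁` gives
`τ(γ J) = τ(γ J²) = 0`. If `a` anticommutes with `X` then `τ(a X) = τ(X a) = -τ(a X)`; this gives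
`τ(Pₖ) = 0` and `τ(Pₖ Pₗ) = 0` for `k ≠ l`, while `Pₖ² = -1`. Hence `τ(J) = 0` and
`τ(J²) = ∑ ωₖ²`.
-/

section Anticommute

variable {A : Type*} [Ring A] {a b c : A}

def Anticommute (a b : A) : Prop :=
  a * b = -(b * a)

theorem Anticommute.eq (h : Anticommute a b) : a * b = -(b * a) :=
  h

theorem Anticommute.symm (h : Anticommute a b) : Anticommute b a := by
  rw [Anticommute, h, neg_neg]

theorem Anticommute.commute_mul (hb : Anticommute a b) (hc : Anticommute a c) :
    Commute a (b * c) := by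
  rw [Commute, SemiconjBy, ← mul_assoc, hb, neg_mul, mul_assoc, hc, mul_neg, neg_neg, mul_assoc]

theorem Anticommute.mul_commute (hb : Anticommute a b) (hc : Commute a c) :
    Anticommute a (b * c) := by
  rw [Anticommute, ← mul_assoc, hb, neg_mul, mul_assoc, hc.eq, mul_assoc]

theorem Commute.mul_anticommute (hb : Commute a b) (hc : Anticommute a c) :
    Anticommute a (b * c) := by
  rw [Anticommute, ← mul_assoc, hb.eq, mul_assoc, hc, mul_neg, mul_assoc]

theorem Anticommute.mul_left (ha : Anticommute a c) (hb : Commute b c) :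
    Anticommute (a * b) c := by
  rw [Anticommute, mul_assoc, hb.eq, ← mul_assoc, ha.eq, neg_mul, mul_assoc]

theorem Anticommute.mul_mul_self (h : Anticommute a b) (ha : a * a = 1) (hb : b * b = 1) :
    a * b * (a * b) = -1 := by
  rw [mul_assoc, ← mul_assoc b a b, h.symm.eq, neg_mul, mul_neg, ← mul_assoc, ← mul_assoc, ha,
    one_mul, hb]

theorem Anticommute.isSelfAdjoint_I_smul_mul [StarRing A] [Algebra ℂ A] [StarModule ℂ A]
    (h : Anticommute a b) (ha : IsSelfAdjoint a) (hb : IsSelfAdjoint b) :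
    IsSelfAdjoint (Complex.I • (a * b)) := by
  rw [IsSelfAdjoint, star_smul, star_mul, ha.star_eq, hb.star_eq, h.symm.eq]
  simp

theorem Anticommute.I_smul_mul_mul_self [Algebra ℂ A] (h : Anticommute a b) (ha : a * a = 1)
    (hb : b * b = 1) : Complex.I • (a * b) * (Complex.I • (a * b)) = 1 := by
  rw [smul_mul_smul_comm, h.mul_mul_self ha hb, Complex.I_mul_I, neg_one_smul, neg_neg]

end Anticommute

namespace Matrix

variable {ι m R : Type*} [Fintype ι]

def piKron [CommMonoid R] (f : ι → Matrix m m R) : Matrix (ι → m) (ι → m) R :=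
  fun x y => ∏ i, f i (x i) (y i)

theorem piKron_mul [DecidableEq ι] [Fintype m] [CommSemiring R] (f g : ι → Matrix m m R) :
    piKron f * piKron g = piKron (f * g) := by
  ext x y
  simp only [piKron, mul_apply, Pi.mul_apply]
  rw [Fintype.prod_sum (fun i k => f i (x i) k * g i k (y i))]
  simp only [Finset.prod_mul_distrib]

theorem piKron_one [DecidableEq m] [CommMonoidWithZero R] :
    piKron (1 : ι → Matrix m m R) = 1 := by
  ext x y
  by_cases h : x = y
  · subst h; simp [piKron]
  · obtain ⟨i, hi⟩ := Function.ne_iff.mp h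
    simpa [piKron, one_apply, h] using Finset.prod_eq_zero (Finset.mem_univ i) (by simp [hi])

theorem piKron_smul [CommMonoid R] (c : ι → R) (f : ι → Matrix m m R) :
    piKron (c • f) = (∏ i, c i) • piKron f := by
  ext x y
  simp [piKron, Finset.prod_mul_distrib]

theorem conjTranspose_piKron [CommSemiring R] [StarRing R] (f : ι → Matrix m m R) :
    (piKron f)ᴴ = piKron (fun i => (f i)ᴴ) := by
  ext x y
  exact map_prod (starRingEnd R) _ _

section Trace

variable [DecidableEq ι] [CommRing R] [NoZeroDivisors R] [CharZero R]

theorem trace_mul_eq_zero_of_anticommute {a b : Matrix ι ι R} (h : Anticommute a b) :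
    (a * b).trace = 0 := by
  rw [← CharZero.eq_neg_self_iff]
  nth_rw 1 [← trace_mul_comm, h.symm, trace_neg]

theorem trace_eq_zero_of_isUnit_of_anticommute {q b : Matrix ι ι R}
    (hq : IsUnit q) (h : Anticommute q b) : b.trace = 0 := by
  obtain ⟨u, rfl⟩ := hq
  have hconj : b = -((u : Matrix ι ι R) * b * (↑u⁻¹ : Matrix ι ι R)) := by
    rw [h.eq, neg_mul, neg_neg, mul_assoc, Units.mul_inv, mul_one]
  rw [← CharZero.eq_neg_self_iff]
  nth_rw 1 [hconj, trace_neg, trace_units_conj]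

theorem trace_conjTranspose_mul_mul_of_involution {u : Matrix ι ι ℂ} (hu : IsSelfAdjoint u)
    (hu2 : u * u = 1) (x : Matrix ι ι ℂ) :
    ((((√2 : ℝ) : ℂ)⁻¹ • (1 + u))ᴴ * x * (((√2 : ℝ) : ℂ)⁻¹ • (1 + u))).trace =
      (x + u * x).trace := by
  set F := ((√2 : ℝ) : ℂ)⁻¹ • (1 + u)
  have hF : Fᴴ = F := by
    simp [F, ← star_eq_conjTranspose, hu.star_eq]
  have hsqrt : ((√2 : ℝ) : ℂ)⁻¹ * ((√2 : ℝ) : ℂ)⁻¹ * 2 = 1 := by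
    rw [← mul_inv, ← Complex.ofReal_mul, Real.mul_self_sqrt zero_le_two]
    norm_num
  have hFF : F * F = 1 + u := by
    have : (1 + u) * (1 + u) = (2 : ℂ) • (1 + u) := by
      rw [add_mul, mul_add, mul_add, hu2, two_smul]
      noncomm_ring
    rw [smul_mul_smul_comm, this, smul_smul, hsqrt, one_smul]
  rw [hF, trace_mul_cycle, hFF, add_mul, one_mul]

end Trace

end Matrix

structure IsMajoranaFamily {ι κ : Type*} [Fintype ι] [DecidableEq ι] (a : κ → Matrix ι ι ℂ) :
    Prop where
  isSelfAdjoint (j : κ) : IsSelfAdjoint (a j)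
  mul_self (j : κ) : a j * a j = 1
  anticommute {j k : κ} : j ≠ k → Anticommute (a j) (a k)

namespace IsMajoranaFamily

variable {ι κ ν : Type*} [Fintype ι] [DecidableEq ι] {a : κ → Matrix ι ι ℂ} {i j k l : κ}

theorem commute_mul (ha : IsMajoranaFamily a) (hk : j ≠ k) (hl : j ≠ l) :
    Commute (a j) (a k * a l) :=
  (ha.anticommute hk).commute_mul (ha.anticommute hl)

theorem commute_mul_mul (ha : IsMajoranaFamily a) (hik : i ≠ k) (hil : i ≠ l) (hjk : j ≠ k)
    (hjl : j ≠ l) : Commute (a i * a j) (a k * a l) :=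
  (ha.commute_mul hik hil).mul_left (ha.commute_mul hjk hjl)

theorem mul_mul_self (ha : IsMajoranaFamily a) (hij : i ≠ j) : a i * a j * (a i * a j) = -1 :=
  (ha.anticommute hij).mul_mul_self (ha.mul_self i) (ha.mul_self j)

theorem trace_mul_mul_eq_zero (ha : IsMajoranaFamily a) (hij : i ≠ j) {x : Matrix ι ι ℂ}
    (hx : Commute (a i) x) : (a i * a j * x).trace = 0 := by
  rw [mul_assoc]
  exact trace_mul_eq_zero_of_anticommute ((ha.anticommute hij).mul_commute hx)

theorem trace_mul_eq_zero (ha : IsMajoranaFamily a) (hij : i ≠ j) : (a i * a j).trace = 0 := by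
  simpa using ha.trace_mul_mul_eq_zero hij (Commute.one_right _)

theorem trace_mul_mul_eq_zero_of_commute (ha : IsMajoranaFamily a) (hij : i ≠ j) (hik : i ≠ k)
    (hjk : j ≠ k) {x : Matrix ι ι ℂ} (hx : Commute (a i * a j) x) : (a i * a k * x).trace = 0 := by
  have hunit : IsUnit (a i * a j) :=
    IsUnit.of_mul_eq_one (-(a i * a j)) (by rw [mul_neg, ha.mul_mul_self hij, neg_neg])
  have hanti : Anticommute (a i * a j) (a i * a k) :=
    ((Commute.refl _).mul_anticommute (ha.anticommute hik)).mul_left (ha.commute_mul hij.symm hjk)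
  exact trace_eq_zero_of_isUnit_of_anticommute hunit (hanti.mul_commute hx)

theorem trace_conjTranspose_mul_mul_of_commute (ha : IsMajoranaFamily a) (hij : i ≠ j)
    (hik : i ≠ k) (hjk : j ≠ k) {x : Matrix ι ι ℂ} (hx : Commute (a i * a j) x) :
    ((((√2 : ℝ) : ℂ)⁻¹ • (1 + Complex.I • (a i * a k)))ᴴ * x *
      (((√2 : ℝ) : ℂ)⁻¹ • (1 + Complex.I • (a i * a k)))).trace = x.trace := by
  have hik' := ha.anticommute hik
  rw [trace_conjTranspose_mul_mul_of_involution
      (hik'.isSelfAdjoint_I_smul_mul (ha.isSelfAdjoint i) (ha.isSelfAdjoint k))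
      (hik'.I_smul_mul_mul_self (ha.mul_self i) (ha.mul_self k)),
    trace_add, smul_mul_assoc, trace_smul, ha.trace_mul_mul_eq_zero_of_commute hij hik hjk hx,
    smul_zero, add_zero]

section Pairs

variable {e o : ν → κ}

theorem commute_pair (ha : IsMajoranaFamily a) (he : e.Injective) (ho : o.Injective)
    (heo : ∀ k l, e k ≠ o l) (k l : ν) : Commute (a (e k) * a (o k)) (a (e l) * a (o l)) := by
  rcases eq_or_ne k l with rfl | hkl
  · exact Commute.refl _
  · exact ha.commute_mul_mul (he.ne hkl) (heo k l) (heo l k).symm (ho.ne hkl)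

theorem trace_pair_mul_pair [DecidableEq ν] (ha : IsMajoranaFamily a) (he : e.Injective)
    (heo : ∀ k l, e k ≠ o l) (k l : ν) :
    (a (e k) * a (o k) * (a (e l) * a (o l))).trace =
      if k = l then -(Fintype.card ι : ℂ) else 0 := by
  split_ifs with hkl
  · subst hkl
    rw [ha.mul_mul_self (heo k k), trace_neg, trace_one]
  · exact ha.trace_mul_mul_eq_zero (heo k k) (ha.commute_mul (he.ne hkl) (heo k l))

variable (w : ν → ℂ)

theorem trace_sum_smul_pair [Fintype ν] (ha : IsMajoranaFamily a) (heo : ∀ k l, e k ≠ o l) :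
    (∑ k, w k • (a (e k) * a (o k))).trace = 0 := by
  simp [trace_sum, fun k => ha.trace_mul_eq_zero (heo k k)]

theorem trace_sum_smul_pair_mul_self [Fintype ν] [DecidableEq ν] (ha : IsMajoranaFamily a)
    (he : e.Injective) (heo : ∀ k l, e k ≠ o l) :
    ((∑ k, w k • (a (e k) * a (o k))) * ∑ k, w k • (a (e k) * a (o k))).trace =
      -(Fintype.card ι * ∑ k, w k ^ 2) := by
  simp_rw [Finset.sum_mul_sum, trace_sum, smul_mul_smul_comm, trace_smul,
    ha.trace_pair_mul_pair he heo, smul_ite, smul_zero, Finset.sum_ite_eq, Finset.mem_univ,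
    if_true, Finset.mul_sum, ← Finset.sum_neg_distrib]
  exact Finset.sum_congr rfl fun k _ => by simp only [smul_eq_mul]; ring

theorem commute_pair_sum_smul [Fintype ν] (ha : IsMajoranaFamily a) (he : e.Injective)
    (ho : o.Injective) (heo : ∀ k l, e k ≠ o l) (l : ν) :
    Commute (a (e l) * a (o l)) (∑ k, w k • (a (e k) * a (o k))) :=
  Commute.sum_right _ _ _ fun k _ => (ha.commute_pair he ho heo l k).smul_right (w k)

end Pairs

end IsMajoranaFamily

section Pauli

theorem pauli1_mul_self : pauli1 * pauli1 = 1 := by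
  simp [pauli1, one_fin_two]

theorem pauli2_mul_self : pauli2 * pauli2 = 1 := by
  simp [pauli2, one_fin_two]

theorem pauli3_mul_self : pauli3 * pauli3 = 1 := by
  simp [pauli3, one_fin_two]

theorem pauli1_mul_pauli2 : pauli1 * pauli2 = -(pauli2 * pauli1) := by
  simp [pauli1, pauli2]

theorem pauli1_mul_pauli3 : pauli1 * pauli3 = -(pauli3 * pauli1) := by
  simp [pauli1, pauli3]

theorem pauli2_mul_pauli3 : pauli2 * pauli3 = -(pauli3 * pauli2) := by
  simp [pauli2, pauli3]

theorem conjTranspose_pauli1 : pauli1ᴴ = pauli1 := by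
  ext i j; fin_cases i <;> fin_cases j <;> simp [pauli1]

theorem conjTranspose_pauli2 : pauli2ᴴ = pauli2 := by
  ext i j; fin_cases i <;> fin_cases j <;> simp [pauli2]

theorem conjTranspose_pauli3 : pauli3ᴴ = pauli3 := by
  ext i j; fin_cases i <;> fin_cases j <;> simp [pauli3]

end Pauli

section Majorana

noncomputable def majoranaFactor (j i : ℕ) : Matrix (Fin 2) (Fin 2) ℂ :=
  if i < j / 2 then pauli3 else if i = j / 2 then (if j % 2 = 0 then pauli1 else pauli2) else 1

theorem majorana_eq_piKron (n : ℕ) (j : Fin (2 * n)) :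
    majorana n j = piKron (fun i : Fin n => majoranaFactor j i) :=
  rfl

theorem conjTranspose_majoranaFactor (j i : ℕ) : (majoranaFactor j i)ᴴ = majoranaFactor j i := by
  unfold majoranaFactor
  split_ifs <;> simp [conjTranspose_pauli1, conjTranspose_pauli2, conjTranspose_pauli3]

theorem majoranaFactor_mul_self (j i : ℕ) : majoranaFactor j i * majoranaFactor j i = 1 := by
  unfold majoranaFactor
  split_ifs <;> simp [pauli1_mul_self, pauli2_mul_self, pauli3_mul_self]

/- Only site `j / 2` anticommutes: there `σ₁` or `σ₂` meets the `σ₃` of `m_k`, or `σ₁` meets `σ₂`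
when `k = j + 1`. -/
theorem majoranaFactor_mul_majoranaFactor_of_lt {j k : ℕ} (hjk : j < k) (i : ℕ) :
    majoranaFactor j i * majoranaFactor k i =
      (if i = j / 2 then -1 else 1 : ℂ) • (majoranaFactor k i * majoranaFactor j i) := by
  unfold majoranaFactor
  rcases lt_trichotomy i (j / 2) with hi | rfl | hi
  · simp [hi, hi.ne, hi.trans_le (Nat.div_le_div_right hjk.le)]
  · rcases (Nat.div_le_div_right (c := 2) hjk.le).lt_or_eq with hlt | heq
    · split_ifs <;> simp_all [pauli1_mul_pauli3, pauli2_mul_pauli3]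
    · have hj : j % 2 = 0 := by omega
      have hk : k % 2 = 1 := by omega
      simp [heq, hj, hk, pauli1_mul_pauli2]
  · simp [hi.ne', not_lt.mpr hi.le]

variable {n : ℕ}

theorem majorana_mul_self (j : Fin (2 * n)) : majorana n j * majorana n j = 1 := by
  rw [majorana_eq_piKron, piKron_mul, ← piKron_one]
  exact congrArg piKron (funext fun i => majoranaFactor_mul_self j i)

theorem isSelfAdjoint_majorana (j : Fin (2 * n)) : IsSelfAdjoint (majorana n j) := by
  rw [IsSelfAdjoint, star_eq_conjTranspose, majorana_eq_piKron, conjTranspose_piKron]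
  simp only [conjTranspose_majoranaFactor]

theorem anticommute_majorana_of_lt {j k : Fin (2 * n)} (hjk : j < k) :
    Anticommute (majorana n j) (majorana n k) := by
  have hsite : (j : ℕ) / 2 < n := by omega
  have hsign : ∏ i : Fin n, (if (i : ℕ) = j / 2 then -1 else 1 : ℂ) = -1 := by
    simp_rw [show ∀ i : Fin n, (i : ℕ) = j / 2 ↔ i = ⟨j / 2, hsite⟩ from
      fun _ => by simp [Fin.ext_iff]]
    simp
  rw [Anticommute, majorana_eq_piKron, majorana_eq_piKron, piKron_mul, piKron_mul,
    ← neg_one_smul ℂ, ← hsign, ← piKron_smul]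
  exact congrArg piKron (funext fun i => majoranaFactor_mul_majoranaFactor_of_lt hjk i)

theorem anticommute_majorana {j k : Fin (2 * n)} (hjk : j ≠ k) :
    Anticommute (majorana n j) (majorana n k) :=
  hjk.lt_or_gt.elim anticommute_majorana_of_lt fun h => (anticommute_majorana_of_lt h).symm

end Majorana

theorem isMajoranaFamily_majorana (n : ℕ) : IsMajoranaFamily (majorana n) where
  isSelfAdjoint := isSelfAdjoint_majorana
  mul_self := majorana_mul_self
  anticommute := anticommute_majorana

/-- **Quantum Fisher information computation**: for the local generator
`J = iΣ_k ω_k m_{2k−1}m_{2k}` and the entangled state `F = (1 + iγ)/√2`,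
`γ = m₁m_{n+1}`, the mean of `J` vanishes, the mean of `J²` is `Σ_k ω_k²`, and
hence the variance of `J` in this state equals `Σ_k ω_k²`. -/
theorem fisher_information_majorana (n : ℕ) (hn : 2 ≤ n) (w : Fin n → ℝ) :
    let γ : Matrix (Fin n → Fin 2) (Fin n → Fin 2) ℂ :=
      majorana n ⟨0, by omega⟩ * majorana n ⟨n, by omega⟩
    let F : Matrix (Fin n → Fin 2) (Fin n → Fin 2) ℂ :=
      ((Real.sqrt 2 : ℂ))⁻¹ • (1 + Complex.I • γ)
    let J : Matrix (Fin n → Fin 2) (Fin n → Fin 2) ℂ :=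
      Complex.I • ∑ k : Fin n,
        (w k : ℂ) •
          (majorana n ⟨2 * (k : ℕ), by omega⟩ *
            majorana n ⟨2 * (k : ℕ) + 1, by omega⟩)
    ((2 : ℂ) ^ n)⁻¹ * (Fᴴ * J * F).trace = 0 ∧
    ((2 : ℂ) ^ n)⁻¹ * (Fᴴ * (J * J) * F).trace = ∑ k : Fin n, ((w k : ℂ)) ^ 2 ∧
    ((2 : ℂ) ^ n)⁻¹ * (Fᴴ * (J * J) * F).trace -
        (((2 : ℂ) ^ n)⁻¹ * (Fᴴ * J * F).trace) ^ 2 =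
      ∑ k : Fin n, ((w k : ℂ)) ^ 2 := by
  intro γ F J
  have ha := isMajoranaFamily_majorana n
  let e : Fin n → Fin (2 * n) := fun k => ⟨2 * k, by omega⟩
  let o : Fin n → Fin (2 * n) := fun k => ⟨2 * k + 1, by omega⟩
  have he : e.Injective := fun k l h => by simpa [e, Fin.ext_iff] using h
  have ho : o.Injective := fun k l h => by simpa [o, Fin.ext_iff] using h
  have heo : ∀ k l, e k ≠ o l := fun k l => by simp [e, o, Fin.ext_iff]; omega
  let k₀ : Fin n := ⟨0, by omega⟩
  let q : Fin (2 * n) := ⟨n, by omega⟩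
  have hq : e k₀ ≠ q ∧ o k₀ ≠ q := by simp [e, o, k₀, q, Fin.ext_iff]; omega
  have hJ : J = Complex.I • ∑ k, (w k : ℂ) • (majorana n (e k) * majorana n (o k)) := rfl
  have hstate (x) (hx : Commute (majorana n (e k₀) * majorana n (o k₀)) x) :
      (Fᴴ * x * F).trace = x.trace :=
    ha.trace_conjTranspose_mul_mul_of_commute (heo k₀ k₀) hq.1 hq.2 hx
  have hcomm : Commute (majorana n (e k₀) * majorana n (o k₀)) J :=
    (ha.commute_pair_sum_smul _ he ho heo k₀).smul_right _
  have hmean : (Fᴴ * J * F).trace = 0 := by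
    rw [hstate J hcomm, hJ, trace_smul, ha.trace_sum_smul_pair _ heo, smul_zero]
  have hsquare : ((2 : ℂ) ^ n)⁻¹ * (Fᴴ * (J * J) * F).trace = ∑ k, (w k : ℂ) ^ 2 := by
    rw [hstate _ (hcomm.mul_right hcomm), hJ, smul_mul_smul_comm, trace_smul,
      ha.trace_sum_smul_pair_mul_self _ he heo, Complex.I_mul_I]
    simp
  exact ⟨by rw [hmean, mul_zero], hsquare, by rw [hmean, hsquare]; ring⟩
end
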